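/- arXiv:1404.3514 — 5 statements merged into one kernel-verified Lean document; each statement's English description precedes it below -/
import Mathlib

section
/- Let h be a positive continuous function on (0,∞) with ∫₀^∞ h(σ)dσ = 1 and let w_h(n) = ∫₀^∞ n^{-2σ} h(σ) dσ for each integer n ≥ 1. Let c₀ be a nonnegative integer and let φ(s) = ∑_{n≥1} c_n n^{-s} be a Dirichlet series converging uniformly on ℂ_ε for every ε > 0, and set Φ(s) = c₀ s + φ(s); assume Φ(ℂ_{1/2}) ⊆ ℂ_{1/2}. Suppose the composition operator is a contraction on Dirichlet polynomials in the A_μ² norm: for every finitely supported sequence (a_n)_{n≥1} of complex numbers there is a sequence (b_m)_{m≥1} such that ∑_{m≥1} b_m m^{-s} converges on ℂ_{1/2}, equals ∑_{n≥1} a_n n^{-Φ(s)} for all s ∈ ℂ_{1/2}, and ∑_{m≥1} |b_m|² w_h(m) ≤ ∑_{n≥1} |a_n|² w_h(n). Then c₀ ≥ 1. -/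
/-!
Suppose `c₀ = 0`. Then `Φ = φ` is bounded on `(1, ∞)`, so `|2^{-Φ(x)}|² ≥ 2^{-2M}` there.
Test the contraction on `f = 1 + (conj 2^{-Φ(x)} / w(2)) 2^{-s}`, the reproducing kernel of
`A_μ²` at `Φ(x)` truncated to two terms:
`‖f‖² = f(Φ(x)) = 1 + |2^{-Φ(x)}|² / w(2) ≥ 1 + 2^{-2M} / w(2)`.
By Cauchy–Schwarz, `|(C_Φ f)(x)|² ≤ ‖C_Φ f‖² K(x) ≤ ‖f‖² K(x)` with `K(x) = ∑ n^{-2x} / w(n)`,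
hence `1 + 2^{-2M} / w(2) ≤ K(x)`. But `w(n) ≥ A n^{-2}`, so by dominated convergence
`K(x) → 1 / w(1) = 1` as `x → ∞`.
-/

open MeasureTheory Filter Finset Topology ComplexConjugate

lemma norm_natCast_add_one_cpow_neg (n : ℕ) (s : ℂ) :
    ‖((n:ℂ)+1) ^ (-s)‖ = ((n:ℝ)+1) ^ (-s.re) := by
  rw [show (n:ℂ) + 1 = (((n:ℝ)+1 : ℝ) : ℂ) by push_cast; rfl,
    Complex.norm_cpow_eq_rpow_re_of_pos (by positivity), Complex.neg_re]

lemma rpow_neg_sq {t : ℝ} (ht : 0 ≤ t) (y : ℝ) : (t ^ (-y)) ^ 2 = t ^ (-(2*y)) := by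
  rw [← Real.rpow_natCast, ← Real.rpow_mul ht]
  ring_nf

lemma rpow_neg_two_mul_le_norm_two_cpow_neg_sq {ζ : ℂ} {M : ℝ} (hζ : ζ.re ≤ M) :
    (2:ℝ) ^ (-(2*M)) ≤ ‖(2:ℂ) ^ (-ζ)‖ ^ 2 := by
  have h := norm_natCast_add_one_cpow_neg 1 ζ
  norm_num at h
  rw [h, rpow_neg_sq zero_le_two]
  exact Real.rpow_le_rpow_of_exponent_le one_le_two (by linarith)

lemma norm_sum_dirichlet_le (c : ℕ → ℂ) (N : ℕ) {s : ℂ} (hs : 0 ≤ s.re) :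
    ‖∑ n ∈ range N, c n * ((n:ℂ)+1) ^ (-s)‖ ≤ ∑ n ∈ range N, ‖c n‖ := by
  refine (norm_sum_le _ _).trans (sum_le_sum fun n _ => ?_)
  rw [norm_mul, norm_natCast_add_one_cpow_neg]
  refine mul_le_of_le_one_right (norm_nonneg _) ?_
  exact Real.rpow_le_one_of_one_le_of_nonpos (by linarith [n.cast_nonneg (α := ℝ)]) (by linarith)

lemma exists_norm_le_of_tendstoUniformlyOn_dirichlet {c : ℕ → ℂ} {φ : ℂ → ℂ} {ε : ℝ}
    (hφ : TendstoUniformlyOn (fun N s => ∑ n ∈ range N, c n * ((n:ℂ)+1) ^ (-s)) φ atTop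
      {s : ℂ | ε < s.re}) (hε : 0 ≤ ε) :
    ∃ M, ∀ s : ℂ, ε < s.re → ‖φ s‖ ≤ M := by
  obtain ⟨N, hN⟩ := (Metric.tendstoUniformlyOn_iff.1 hφ 1 one_pos).exists
  refine ⟨∑ n ∈ range N, ‖c n‖ + 1, fun s hs => ?_⟩
  calc ‖φ s‖ ≤ ‖∑ n ∈ range N, c n * ((n:ℂ)+1) ^ (-s)‖
        + dist (φ s) (∑ n ∈ range N, c n * ((n:ℂ)+1) ^ (-s)) := by
        rw [dist_eq_norm]; exact norm_le_norm_add_norm_sub' _ _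
    _ ≤ ∑ n ∈ range N, ‖c n‖ + 1 :=
        add_le_add (norm_sum_dirichlet_le c N (hε.trans hs.le)) (hN s hs).le

section Weight

variable {h : ℝ → ℝ} {w : ℕ → ℝ}

lemma weight_zero_eq_one (hh_int : ∫ σ in Set.Ioi (0:ℝ), h σ = 1)
    (hw : ∀ n : ℕ, w n = ∫ σ in Set.Ioi (0:ℝ), ((n:ℝ)+1) ^ (-(2:ℝ)*σ) * h σ) :
    w 0 = 1 := by
  simpa [hw 0] using hh_int

lemma exists_pos_mul_rpow_neg_two_le_weight (hh_pos : ∀ σ ∈ Set.Ioi (0:ℝ), 0 < h σ)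
    (hh_int : ∫ σ in Set.Ioi (0:ℝ), h σ = 1)
    (hw : ∀ n : ℕ, w n = ∫ σ in Set.Ioi (0:ℝ), ((n:ℝ)+1) ^ (-(2:ℝ)*σ) * h σ) :
    ∃ A > 0, ∀ n : ℕ, A * ((n:ℝ)+1) ^ (-2:ℝ) ≤ w n := by
  have hint : IntegrableOn h (Set.Ioi 0) := by
    by_contra H
    simp [integral_undef H] at hh_int
  have hint01 : IntegrableOn h (Set.Ioc 0 1) := hint.mono_set Set.Ioc_subset_Ioi_self
  refine ⟨∫ σ in Set.Ioc (0:ℝ) 1, h σ, ?_, fun n => ?_⟩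
  · rw [← intervalIntegral.integral_of_le zero_le_one]
    refine intervalIntegral.intervalIntegral_pos_of_pos_on ?_ (fun σ hσ => hh_pos σ hσ.1) one_pos
    exact (intervalIntegrable_iff_integrableOn_Ioc_of_le zero_le_one).2 hint01
  have hbase : 1 ≤ (n:ℝ) + 1 := by linarith [n.cast_nonneg (α := ℝ)]
  have hkernel_nonneg (σ : ℝ) : 0 ≤ ((n:ℝ)+1) ^ (-(2:ℝ)*σ) := by positivity
  have hint_kernel : IntegrableOn (fun σ => ((n:ℝ)+1) ^ (-(2:ℝ)*σ) * h σ) (Set.Ioi 0) := by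
    refine hint.bdd_mul (c := 1) (by fun_prop (disch := positivity)) ?_
    filter_upwards [ae_restrict_mem measurableSet_Ioi] with σ hσ
    rw [Real.norm_of_nonneg (hkernel_nonneg σ)]
    exact Real.rpow_le_one_of_one_le_of_nonpos hbase (by linarith [hσ.out])
  rw [hw n, mul_comm, ← integral_const_mul]
  calc ∫ σ in Set.Ioc (0:ℝ) 1, ((n:ℝ)+1) ^ (-2:ℝ) * h σ
      ≤ ∫ σ in Set.Ioc (0:ℝ) 1, ((n:ℝ)+1) ^ (-(2:ℝ)*σ) * h σ := by
        refine setIntegral_mono_on (hint01.const_mul _)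
          (hint_kernel.mono_set Set.Ioc_subset_Ioi_self) measurableSet_Ioc fun σ hσ => ?_
        gcongr
        · exact (hh_pos σ hσ.1).le
        · nlinarith [hσ.2]
    _ ≤ ∫ σ in Set.Ioi (0:ℝ), ((n:ℝ)+1) ^ (-(2:ℝ)*σ) * h σ := by
        refine setIntegral_mono_set hint_kernel ?_ Set.Ioc_subset_Ioi_self.eventuallyLE
        filter_upwards [ae_restrict_mem measurableSet_Ioi] with σ hσ
        exact mul_nonneg (hkernel_nonneg σ) (hh_pos σ hσ).le

end Weight

/-- `K(x, x)` for the reproducing kernel of `A_μ²`; index `m` stands for the integer `m + 1`. -/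
noncomputable def kernelDiag (w : ℕ → ℝ) (x : ℝ) : ℝ :=
  ∑' m : ℕ, ((m:ℝ)+1) ^ (-(2*x)) / w m

lemma summable_natCast_add_one_rpow_neg_two : Summable fun m : ℕ => ((m:ℝ)+1) ^ (-2:ℝ) := by
  exact_mod_cast (summable_nat_add_iff 1).2 (Real.summable_nat_rpow.2 (by norm_num : (-2:ℝ) < -1))

section Kernel

variable {w : ℕ → ℝ} {A : ℝ}

lemma rpow_neg_two_mul_div_weight_le (hA : 0 < A) (hwA : ∀ n : ℕ, A * ((n:ℝ)+1) ^ (-2:ℝ) ≤ w n)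
    {x : ℝ} (hx : 2 ≤ x) (m : ℕ) :
    ((m:ℝ)+1) ^ (-(2*x)) / w m ≤ ((m:ℝ)+1) ^ (-2:ℝ) / A := by
  have hbase : 1 ≤ (m:ℝ) + 1 := by linarith [m.cast_nonneg (α := ℝ)]
  have hpow : ((m:ℝ)+1) ^ (-(2*x)) ≤ ((m:ℝ)+1) ^ (-2:ℝ) * ((m:ℝ)+1) ^ (-2:ℝ) := by
    rw [← Real.rpow_add (by positivity)]
    exact Real.rpow_le_rpow_of_exponent_le hbase (by linarith)
  have hwm : 0 < w m := lt_of_lt_of_le (by positivity) (hwA m)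
  rw [div_le_div_iff₀ hwm hA]
  calc ((m:ℝ)+1) ^ (-(2*x)) * A ≤ ((m:ℝ)+1) ^ (-2:ℝ) * ((m:ℝ)+1) ^ (-2:ℝ) * A := by gcongr
    _ ≤ ((m:ℝ)+1) ^ (-2:ℝ) * w m := by rw [mul_assoc, mul_comm _ A]; gcongr; exact hwA m

lemma summable_kernelDiag (hA : 0 < A) (hwA : ∀ n : ℕ, A * ((n:ℝ)+1) ^ (-2:ℝ) ≤ w n)
    {x : ℝ} (hx : 2 ≤ x) : Summable fun m : ℕ => ((m:ℝ)+1) ^ (-(2*x)) / w m :=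
  (summable_natCast_add_one_rpow_neg_two.div_const A).of_nonneg_of_le
    (fun m => div_nonneg (by positivity) (lt_of_lt_of_le (by positivity) (hwA m)).le)
    (rpow_neg_two_mul_div_weight_le hA hwA hx)

lemma tendsto_kernelDiag (hA : 0 < A) (hwA : ∀ n : ℕ, A * ((n:ℝ)+1) ^ (-2:ℝ) ≤ w n) :
    Tendsto (kernelDiag w) atTop (𝓝 (1 / w 0)) := by
  have hlim (m : ℕ) : Tendsto (fun x : ℝ => ((m:ℝ)+1) ^ (-(2*x)) / w m) atTop
      (𝓝 (if m = 0 then 1 / w 0 else 0)) := by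
    rcases Nat.eq_zero_or_pos m with rfl | hm
    · simp
    · rw [if_neg hm.ne', ← zero_div (w m)]
      refine (tendsto_rpow_atBot_of_base_gt_one _ ?_ |>.comp ?_).div_const _
      · exact_mod_cast Nat.succ_lt_succ hm
      · exact tendsto_neg_atTop_atBot.comp (tendsto_id.const_mul_atTop two_pos)
  have hbound : ∀ᶠ x : ℝ in atTop, ∀ m : ℕ,
      ‖((m:ℝ)+1) ^ (-(2*x)) / w m‖ ≤ ((m:ℝ)+1) ^ (-2:ℝ) / A := by
    filter_upwards [eventually_ge_atTop 2] with x hx m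
    rw [Real.norm_of_nonneg (div_nonneg (by positivity)
      (lt_of_lt_of_le (by positivity) (hwA m)).le)]
    exact rpow_neg_two_mul_div_weight_le hA hwA hx m
  have := tendsto_tsum_of_dominated_convergence
    (summable_natCast_add_one_rpow_neg_two.div_const A) hlim hbound
  rwa [tsum_ite_eq] at this

end Kernel

lemma norm_sq_le_of_tendsto_sum_mul {b u : ℕ → ℂ} {w : ℕ → ℝ} {L : ℂ} (hw : ∀ m, 0 < w m)
    (hb : Summable fun m => ‖b m‖ ^ 2 * w m) (hu : Summable fun m => ‖u m‖ ^ 2 / w m)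
    (hL : Tendsto (fun N => ∑ m ∈ range N, b m * u m) atTop (𝓝 L)) :
    ‖L‖ ^ 2 ≤ (∑' m, ‖b m‖ ^ 2 * w m) * ∑' m, ‖u m‖ ^ 2 / w m := by
  have hb0 (m : ℕ) : 0 ≤ ‖b m‖ ^ 2 * w m := mul_nonneg (sq_nonneg _) (hw m).le
  have hu0 (m : ℕ) : 0 ≤ ‖u m‖ ^ 2 / w m := div_nonneg (sq_nonneg _) (hw m).le
  have hpartial (N : ℕ) : ‖∑ m ∈ range N, b m * u m‖ ^ 2
      ≤ (∑' m, ‖b m‖ ^ 2 * w m) * ∑' m, ‖u m‖ ^ 2 / w m := by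
    calc ‖∑ m ∈ range N, b m * u m‖ ^ 2 ≤ (∑ m ∈ range N, ‖b m‖ * ‖u m‖) ^ 2 := by
          gcongr
          simpa only [norm_mul] using norm_sum_le (range N) (fun m => b m * u m)
      _ ≤ (∑ m ∈ range N, ‖b m‖ ^ 2 * w m) * ∑ m ∈ range N, ‖u m‖ ^ 2 / w m :=
          sum_sq_le_sum_mul_sum_of_sq_le_mul _ (fun m _ => hb0 m) (fun m _ => hu0 m)
            fun m _ => le_of_eq (by field_simp [(hw m).ne'])
      _ ≤ _ := mul_le_mul (hb.sum_le_tsum _ fun m _ => hb0 m) (hu.sum_le_tsum _ fun m _ => hu0 m)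
            (sum_nonneg fun m _ => hu0 m) (tsum_nonneg hb0)
  exact le_of_tendsto' ((continuous_norm.pow 2).tendsto L |>.comp hL) hpartial

lemma Finsupp.sum_support_single_zero_add_single_one {R M : Type*} [AddCommMonoid R]
    [AddCommMonoid M] (x y : R) (F : ℕ → R → M) (hF : ∀ n, F n 0 = 0) :
    ∑ n ∈ (single 0 x + single 1 y : ℕ →₀ R).support, F n ((single 0 x + single 1 y : ℕ →₀ R) n)
      = F 0 x + F 1 y := by
  rw [Finset.sum_subset (s₂ := {0, 1})]
  · simp
  · exact Finsupp.support_add.trans (Finset.union_subset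
      (Finsupp.support_single_subset.trans (by simp))
      (Finsupp.support_single_subset.trans (by simp)))
  · intro n _ hn
    rw [Finsupp.notMem_support_iff.1 hn, hF]

/-- Coefficients of `1 + (conj 2^{-ζ} / w(2)) 2^{-s}`, the reproducing kernel at `ζ` cut down to
the integers `1, 2` (index `n` is the coefficient of `(n + 1)^{-s}`). -/
noncomputable def twoTermKernel (w : ℕ → ℝ) (ζ : ℂ) : ℕ →₀ ℂ :=
  Finsupp.single 0 1 + Finsupp.single 1 (conj ((2:ℂ) ^ (-ζ)) / w 1)

section TwoTermKernel

variable {w : ℕ → ℝ}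

lemma sum_twoTermKernel_mul_cpow (ζ : ℂ) :
    ∑ n ∈ (twoTermKernel w ζ).support, twoTermKernel w ζ n * ((n:ℂ)+1) ^ (-ζ)
      = ((1 + ‖(2:ℂ) ^ (-ζ)‖ ^ 2 / w 1 : ℝ) : ℂ) := by
  rw [twoTermKernel, Finsupp.sum_support_single_zero_add_single_one _ _
    (fun n a => a * ((n:ℂ)+1) ^ (-ζ)) fun n => zero_mul _]
  push_cast
  rw [← Complex.conj_mul']
  norm_num
  ring

lemma sum_twoTermKernel_norm_sq_mul (ζ : ℂ) :
    ∑ n ∈ (twoTermKernel w ζ).support, ‖twoTermKernel w ζ n‖ ^ 2 * w n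
      = w 0 + ‖(2:ℂ) ^ (-ζ)‖ ^ 2 / w 1 := by
  rw [twoTermKernel, Finsupp.sum_support_single_zero_add_single_one _ _
    (fun n a => ‖a‖ ^ 2 * w n) fun n => by simp]
  rcases eq_or_ne (w 1) 0 with h1 | h1
  · simp [h1]
  · simp only [norm_one, one_pow, one_mul, Complex.norm_div, RCLike.norm_conj, Complex.norm_real,
      Real.norm_eq_abs, div_pow, sq_abs]
    field_simp

lemma one_add_norm_sq_div_le_kernelDiag (hw0 : w 0 = 1) (hwpos : ∀ m, 0 < w m) {x : ℝ}
    (hK : Summable fun m : ℕ => ((m:ℝ)+1) ^ (-(2*x)) / w m) {ζ : ℂ} {b : ℕ → ℂ}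
    (hb_tend : Tendsto (fun N => ∑ m ∈ range N, b m * ((m:ℂ)+1) ^ (-(x:ℂ))) atTop
      (𝓝 (∑ n ∈ (twoTermKernel w ζ).support, twoTermKernel w ζ n * ((n:ℂ)+1) ^ (-ζ))))
    (hb_sum : Summable fun m => ‖b m‖ ^ 2 * w m)
    (hb_le : ∑' m, ‖b m‖ ^ 2 * w m
      ≤ ∑ n ∈ (twoTermKernel w ζ).support, ‖twoTermKernel w ζ n‖ ^ 2 * w n) :
    1 + ‖(2:ℂ) ^ (-ζ)‖ ^ 2 / w 1 ≤ kernelDiag w x := by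
  have hu (m : ℕ) : ‖((m:ℂ)+1) ^ (-(x:ℂ))‖ ^ 2 / w m = ((m:ℝ)+1) ^ (-(2*x)) / w m := by
    rw [norm_natCast_add_one_cpow_neg, Complex.ofReal_re, rpow_neg_sq (by positivity)]
  rw [sum_twoTermKernel_mul_cpow] at hb_tend
  rw [sum_twoTermKernel_norm_sq_mul, hw0] at hb_le
  set T := 1 + ‖(2:ℂ) ^ (-ζ)‖ ^ 2 / w 1
  have hT : 0 < T := by have := hwpos 1; positivity
  have hCS : T ^ 2 ≤ (∑' m, ‖b m‖ ^ 2 * w m) * kernelDiag w x := by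
    simpa only [kernelDiag, hu, Complex.norm_real, Real.norm_of_nonneg hT.le] using
      norm_sq_le_of_tendsto_sum_mul hwpos hb_sum (by simpa only [hu] using hK) hb_tend
  have hK0 : 0 ≤ kernelDiag w x := tsum_nonneg fun m => div_nonneg (by positivity) (hwpos m).le
  nlinarith [mul_le_mul_of_nonneg_right hb_le hK0]

end TwoTermKernel

theorem contraction_implies_c0_ge_one_general
    (h : ℝ → ℝ)
    (hh_pos : ∀ σ ∈ Set.Ioi (0:ℝ), 0 < h σ)
    (hh_int : ∫ σ in Set.Ioi (0:ℝ), h σ = 1)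
    (w : ℕ → ℝ)
    (hw : ∀ n : ℕ, w n = ∫ σ in Set.Ioi (0:ℝ), ((n:ℝ)+1) ^ (-(2:ℝ)*σ) * h σ)
    (c₀ : ℕ) (c : ℕ → ℂ) (φ Φ : ℂ → ℂ)
    (hφ : ∀ ε > (0:ℝ), TendstoUniformlyOn
      (fun N s => ∑ n ∈ Finset.range N, c n * ((n:ℂ)+1) ^ (-s)) φ atTop
      {s : ℂ | ε < s.re})
    (hΦ : ∀ s : ℂ, Φ s = (c₀ : ℂ) * s + φ s)
    (hcontr : ∀ a : ℕ →₀ ℂ, ∃ b : ℕ → ℂ,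
      (∀ s : ℂ, 1/2 < s.re →
        Tendsto (fun N => ∑ m ∈ Finset.range N, b m * ((m:ℂ)+1) ^ (-s)) atTop
          (nhds (∑ n ∈ a.support, a n * ((n:ℂ)+1) ^ (-(Φ s))))) ∧
      Summable (fun m : ℕ => ‖b m‖^2 * w m) ∧
      ∑' m : ℕ, ‖b m‖^2 * w m ≤ ∑ n ∈ a.support, ‖a n‖^2 * w n) :
    1 ≤ c₀ := by
  obtain ⟨A, hA, hwA⟩ := exists_pos_mul_rpow_neg_two_le_weight hh_pos hh_int hw
  have hw0 : w 0 = 1 := weight_zero_eq_one hh_int hw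
  have hwpos (n : ℕ) : 0 < w n := lt_of_lt_of_le (by positivity) (hwA n)
  obtain ⟨M, hM⟩ := exists_norm_le_of_tendstoUniformlyOn_dirichlet (hφ 1 one_pos) zero_le_one
  by_contra hc
  have hΦφ (s : ℂ) : Φ s = φ s := by simp [hΦ, show c₀ = 0 by omega]
  set δ : ℝ := (2:ℝ) ^ (-(2*M)) / w 1
  have hδ : 0 < δ := by have := hwpos 1; positivity
  obtain ⟨x, hxK, hx⟩ := (((tendsto_kernelDiag hA hwA).eventually_lt_const
    (by rw [hw0]; linarith : 1 / w 0 < 1 + δ)).and (eventually_ge_atTop 2)).exists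
  obtain ⟨b, hb_tend, hb_sum, hb_le⟩ := hcontr (twoTermKernel w (Φ x))
  have hkernel := one_add_norm_sq_div_le_kernelDiag hw0 hwpos (summable_kernelDiag hA hwA hx)
    (hb_tend x (by simp only [Complex.ofReal_re]; linarith)) hb_sum hb_le
  have hΦx : (Φ x).re ≤ M := (Complex.re_le_norm _).trans
    (hΦφ x ▸ hM x (by simp only [Complex.ofReal_re]; linarith))
  have hδle : δ ≤ ‖(2:ℂ) ^ (-Φ x)‖ ^ 2 / w 1 :=
    div_le_div_of_nonneg_right (rpow_neg_two_mul_le_norm_two_cpow_neg_sq hΦx) (hwpos 1).le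
  linarith

/-- If the composition operator `C_Φ` is a contraction on the weighted Bergman space
`A_μ²` of Dirichlet series (`dμ = h dσ`), then `c₀ ≥ 1`. -/
theorem contraction_implies_c0_ge_one
    (h : ℝ → ℝ)
    (hh_pos : ∀ σ ∈ Set.Ioi (0:ℝ), 0 < h σ)
    (hh_cont : ContinuousOn h (Set.Ioi 0))
    (hh_int : ∫ σ in Set.Ioi (0:ℝ), h σ = 1)
    (w : ℕ → ℝ)
    (hw : ∀ n : ℕ, w n = ∫ σ in Set.Ioi (0:ℝ), ((n:ℝ)+1) ^ (-(2:ℝ)*σ) * h σ)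
    (c₀ : ℕ) (c : ℕ → ℂ) (φ Φ : ℂ → ℂ)
    (hφ : ∀ ε > (0:ℝ), TendstoUniformlyOn
      (fun N s => ∑ n ∈ Finset.range N, c n * ((n:ℂ)+1) ^ (-s)) φ atTop
      {s : ℂ | ε < s.re})
    (hΦ : ∀ s : ℂ, Φ s = (c₀ : ℂ) * s + φ s)
    (hmap : ∀ s : ℂ, 1/2 < s.re → 1/2 < (Φ s).re)
    (hcontr : ∀ a : ℕ →₀ ℂ, ∃ b : ℕ → ℂ,
      (∀ s : ℂ, 1/2 < s.re →
        Tendsto (fun N => ∑ m ∈ Finset.range N, b m * ((m:ℂ)+1) ^ (-s)) atTop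
          (nhds (∑ n ∈ a.support, a n * ((n:ℂ)+1) ^ (-(Φ s))))) ∧
      Summable (fun m : ℕ => ‖b m‖^2 * w m) ∧
      ∑' m : ℕ, ‖b m‖^2 * w m ≤ ∑ n ∈ a.support, ‖a n‖^2 * w n) :
    1 ≤ c₀ :=
  contraction_implies_c0_ge_one_general h hh_pos hh_int w hw c₀ c φ Φ hφ hΦ hcontr
end

section
/- Let h be a positive continuous function on (0,∞) with ∫₀^∞ h(σ)dσ = 1 and let w_h(n) = ∫₀^∞ n^{-2σ} h(σ) dσ for each integer n ≥ 1. Then the function x ↦ ∑_{n=1}^∞ n^{-x}/w_h(n) tends to 1 as x → +∞. (In particular w_h(1) = 1 and the terms with n ≥ 2 contribute a quantity tending to 0.) -/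
/-!
Since `∫ h = 1` we have `w_h(1) = 1`, so the term `n = 1` of the series is constantly `1`.
For `n ≥ 2` the weight is bounded below by restricting its integral to `(0, 1]`:
`w_h(n) ≥ n⁻² c` with `c = ∫_{(0,1]} h > 0`. Hence for `x ≥ 4` every term is dominated by
`n⁻² / c`, which is summable, while each term with `n ≥ 2` tends to `0`; dominated convergence
for series (Tannery's theorem) gives the limit `1`.
-/

open MeasureTheory Filter Set Topology

section WeightIntegrand

variable {h : ℝ → ℝ} {a : ℝ}

lemma norm_rpow_neg_two_mul_le_one (ha : 1 ≤ a) {σ : ℝ} (hσ : 0 ≤ σ) :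
    ‖a ^ (-(2:ℝ) * σ)‖ ≤ 1 := by
  rw [Real.norm_of_nonneg (Real.rpow_nonneg (zero_le_one.trans ha) _)]
  exact Real.rpow_le_one_of_one_le_of_nonpos ha (by linarith)

lemma integrableOn_rpow_neg_two_mul_mul (ha : 1 ≤ a) (hh : IntegrableOn h (Ioi 0)) :
    IntegrableOn (fun σ => a ^ (-(2:ℝ) * σ) * h σ) (Ioi 0) :=
  hh.bdd_mul (c := 1)
    (by fun_prop : Measurable fun σ : ℝ => a ^ (-(2:ℝ) * σ)).aestronglyMeasurable <|
    (ae_restrict_mem measurableSet_Ioi).mono fun _ hσ =>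
      norm_rpow_neg_two_mul_le_one ha (le_of_lt hσ)

lemma mul_setIntegral_Ioc_le_setIntegral_rpow_neg_two_mul (ha : 1 ≤ a)
    (hh_nonneg : ∀ σ ∈ Ioi (0:ℝ), 0 ≤ h σ) (hh : IntegrableOn h (Ioi 0)) :
    a ^ (-(2:ℝ)) * ∫ σ in Ioc 0 1, h σ ≤ ∫ σ in Ioi 0, a ^ (-(2:ℝ) * σ) * h σ := by
  have hsub : Ioc (0:ℝ) 1 ⊆ Ioi 0 := Ioc_subset_Ioi_self
  rw [← integral_const_mul]
  calc ∫ σ in Ioc 0 1, a ^ (-(2:ℝ)) * h σ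
      ≤ ∫ σ in Ioc 0 1, a ^ (-(2:ℝ) * σ) * h σ := by
        refine setIntegral_mono_on ((hh.mono_set hsub).const_mul _)
          ((integrableOn_rpow_neg_two_mul_mul ha hh).mono_set hsub) measurableSet_Ioc
          fun σ hσ => ?_
        gcongr
        · exact hh_nonneg σ (hsub hσ)
        · nlinarith [hσ.2]
    _ ≤ ∫ σ in Ioi 0, a ^ (-(2:ℝ) * σ) * h σ :=
        setIntegral_mono_set (integrableOn_rpow_neg_two_mul_mul ha hh)
          ((ae_restrict_mem measurableSet_Ioi).mono fun σ hσ =>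
            mul_nonneg (Real.rpow_nonneg (zero_le_one.trans ha) _) (hh_nonneg σ hσ))
          hsub.eventuallyLE

end WeightIntegrand

lemma norm_rpow_neg_div_le {a c w x : ℝ} (ha : 1 ≤ a) (hc : 0 < c)
    (hw : a ^ (-(2:ℝ)) * c ≤ w) (hx : 4 ≤ x) :
    ‖a ^ (-x) / w‖ ≤ a ^ (-(2:ℝ)) / c := by
  have ha₀ : 0 < a := zero_lt_one.trans_le ha
  have hw₀ : 0 < w := (by positivity : 0 < a ^ (-(2:ℝ)) * c).trans_le hw
  rw [Real.norm_of_nonneg (by positivity)]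
  calc a ^ (-x) / w ≤ a ^ (-x) / (a ^ (-(2:ℝ)) * c) := by gcongr
    _ = a ^ (-x - -2) / c := by rw [Real.rpow_sub ha₀, div_div]
    _ ≤ a ^ (-(2:ℝ)) / c := by gcongr; linarith

theorem tendsto_sum_inv_weight_general
    (h : ℝ → ℝ)
    (hh_pos : ∀ σ ∈ Set.Ioi (0:ℝ), 0 < h σ)
    (hh_int : ∫ σ in Set.Ioi (0:ℝ), h σ = 1)
    (w : ℕ → ℝ)
    (hw : ∀ n : ℕ, w n = ∫ σ in Set.Ioi (0:ℝ), ((n:ℝ)+1) ^ (-(2:ℝ)*σ) * h σ) :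
    Tendsto (fun x : ℝ => ∑' n : ℕ, ((n:ℝ)+1) ^ (-x) / w n) atTop (nhds 1) := by
  have hInt : IntegrableOn h (Ioi 0) := Integrable.of_integral_ne_zero (by simp [hh_int])
  have hc : 0 < ∫ σ in Ioc (0:ℝ) 1, h σ := by
    rw [← intervalIntegral.integral_of_le zero_le_one]
    exact intervalIntegral.intervalIntegral_pos_of_pos_on
      ((intervalIntegrable_iff_integrableOn_Ioc_of_le zero_le_one).2
        (hInt.mono_set Ioc_subset_Ioi_self))
      (fun σ hσ => hh_pos σ hσ.1) zero_lt_one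
  set c := ∫ σ in Ioc (0:ℝ) 1, h σ
  have one_le (n : ℕ) : (1:ℝ) ≤ n + 1 := le_add_of_nonneg_left n.cast_nonneg
  have hw_lb (n : ℕ) : ((n:ℝ) + 1) ^ (-(2:ℝ)) * c ≤ w n := hw n ▸
    mul_setIntegral_Ioc_le_setIntegral_rpow_neg_two_mul (one_le n)
      (fun σ hσ => (hh_pos σ hσ).le) hInt
  have hw0 : w 0 = 1 := by simpa [hh_int] using hw 0
  have hlim (n : ℕ) : Tendsto (fun x : ℝ => ((n:ℝ) + 1) ^ (-x) / w n) atTop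
      (𝓝 (if n = 0 then 1 else 0)) := by
    rcases n with _ | n
    · simp [hw0]
    · simpa using ((tendsto_rpow_atBot_of_base_gt_one _ (by linarith [one_le n])).comp
        tendsto_neg_atTop_atBot).div_const (w (n + 1))
  have hsum : Summable fun n : ℕ => ((n:ℝ) + 1) ^ (-(2:ℝ)) / c := by
    have := (summable_nat_add_iff 1).2 ((Real.summable_nat_rpow (p := -2)).2 (by norm_num))
    exact_mod_cast this.div_const c
  have hbound : ∀ᶠ x : ℝ in atTop, ∀ n : ℕ,
      ‖((n:ℝ) + 1) ^ (-x) / w n‖ ≤ ((n:ℝ) + 1) ^ (-(2:ℝ)) / c :=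
    (eventually_ge_atTop 4).mono fun x hx n => norm_rpow_neg_div_le (one_le n) hc (hw_lb n) hx
  simpa using tendsto_tsum_of_dominated_convergence hsum hlim hbound

/-- The function `x ↦ ∑_{n≥1} n^{-x}/w_h(n)` tends to `1` as `x → +∞`. -/
theorem tendsto_sum_inv_weight
    (h : ℝ → ℝ)
    (hh_pos : ∀ σ ∈ Set.Ioi (0:ℝ), 0 < h σ)
    (hh_cont : ContinuousOn h (Set.Ioi 0))
    (hh_int : ∫ σ in Set.Ioi (0:ℝ), h σ = 1)
    (w : ℕ → ℝ)
    (hw : ∀ n : ℕ, w n = ∫ σ in Set.Ioi (0:ℝ), ((n:ℝ)+1) ^ (-(2:ℝ)*σ) * h σ) :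
    Tendsto (fun x : ℝ => ∑' n : ℕ, ((n:ℝ)+1) ^ (-x) / w n) atTop (nhds 1) :=
  tendsto_sum_inv_weight_general h hh_pos hh_int w hw
end

section
/- Let h be a positive continuous function on (0,∞) with ∫₀^∞ h(σ)dσ = 1 and let w_h(n) = ∫₀^∞ n^{-2σ} h(σ) dσ for each integer n ≥ 1. Let P(s) = ∑_{n=1}^N a_n n^{-s} be a Dirichlet polynomial. Then for every s ∈ ℂ with Re s > 1, |P(s)| ≤ ( ∫₀^∞ [limsup_{T→∞} (1/(2T)) ∫_{−T}^{T} |P(σ+it)| dt ] h(σ) dσ ) · ∑_{n=1}^∞ n^{−Re s}/w_h(n). -/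
/-!
Averaging `P(σ + it) (m + 1) ^ (it)` over `t ∈ [-T, T]` and letting `T → ∞` kills every term but
the `m`-th, because the frequencies `log (n + 1)` are distinct; hence `‖a m‖ (m + 1) ^ (-σ)` is at
most the mean modulus `M(σ)` of `P` on the line `Re s = σ`. As `(m + 1) ^ (-2σ) ≤ (m + 1) ^ (-σ)`,
integrating against `h` gives `‖a m‖ w m ≤ ∫ M h`, and the triangle inequality bounds `‖P s‖` by
`(∫ M h) ∑ (n + 1) ^ (-Re s) / w n`. The series converges because
`w n ≥ (∫₀^ε h) (n + 1) ^ (-2ε)` for every `ε > 0`.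
-/

open MeasureTheory Filter Set Topology

theorem limsup_div_eq_limsup_natCast_div {F : ℝ → ℝ} {C : ℝ} (hmono : MonotoneOn F (Ici 0))
    (hF₀ : 0 ≤ F 0) (hFC : ∀ T ≥ 0, F T ≤ C * T) :
    limsup (fun T : ℝ => F T / T) atTop = limsup (fun k : ℕ => F k / k) atTop := by
  have hF : ∀ T ≥ 0, 0 ≤ F T := fun T hT => hF₀.trans (hmono self_mem_Ici hT hT)
  have hFC' : ∀ T > 0, F T / T ≤ C := fun T hT => (div_le_iff₀ hT).2 (hFC T hT.le)
  have h_above : IsBoundedUnder (· ≤ ·) atTop (fun T : ℝ => F T / T) :=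
    isBoundedUnder_of_eventually_le <| (eventually_gt_atTop 0).mono hFC'
  have h_below : IsBoundedUnder (· ≥ ·) atTop (fun T : ℝ => F T / T) :=
    isBoundedUnder_of_eventually_ge <| (eventually_gt_atTop 0).mono fun T hT =>
      div_nonneg (hF T hT.le) hT.le
  have hN : Tendsto (Nat.cast : ℕ → ℝ) atTop atTop := tendsto_natCast_atTop_atTop
  refine le_antisymm (le_of_forall_pos_le_add fun ε hε => ?_)
    (hN.limsup_comp_le_limsup
      (isBoundedUnder_map_iff.2 (hN.isBoundedUnder_comp h_below)).isCoboundedUnder_le h_above)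
  set L := limsup (fun k : ℕ => F k / k) atTop
  have h_step : ∀ T > 0, F T / T ≤ F (⌊T⌋₊ + 1 : ℕ) / (⌊T⌋₊ + 1 : ℕ) + C / T := by
    intro T hT
    set k : ℝ := ((⌊T⌋₊ + 1 : ℕ) : ℝ)
    have hTk : T < k := by simpa [k] using Nat.lt_floor_add_one T
    have hkT : k ≤ T + 1 := by simpa [k] using Nat.floor_le hT.le
    have hk : 0 < k := hT.trans hTk
    have hFk : F T ≤ F k := hmono hT.le (hT.trans hTk).le hTk.le
    calc F T / T ≤ F k / T := by gcongr
      _ = F k / k + F k * (k - T) / k / T := by field_simp; ring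
      _ ≤ F k / k + C / T := by
        gcongr
        rw [div_le_iff₀ hk]
        nlinarith [hF k hk.le, hFC k hk.le]
  have h_floor : Tendsto (fun T : ℝ => ⌊T⌋₊ + 1) atTop atTop :=
    (tendsto_add_atTop_nat 1).comp tendsto_nat_floor_atTop
  have h_nat : ∀ᶠ k : ℕ in atTop, F k / k < L + ε / 2 :=
    eventually_lt_of_limsup_lt (by linarith) (hN.isBoundedUnder_comp h_above)
  have h_small : ∀ᶠ T : ℝ in atTop, C / T < ε / 2 :=
    (tendsto_const_nhds.div_atTop tendsto_id).eventually (gt_mem_nhds (by positivity))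
  refine limsup_le_of_le h_below.isCoboundedUnder_le ?_
  filter_upwards [h_floor.eventually h_nat, h_small, eventually_gt_atTop 0] with T h1 h2 hT
  linarith [h_step T hT]

theorem tendsto_mean_exp_mul_I (ξ : ℝ) :
    Tendsto (fun T : ℝ => (2 * T)⁻¹ • ∫ t in (-T)..T, Complex.exp (ξ * t * Complex.I)) atTop
      (𝓝 (if ξ = 0 then 1 else 0)) := by
  split_ifs with hξ
  · refine tendsto_const_nhds.congr' ?_
    filter_upwards [eventually_gt_atTop 0] with T hT
    have : (T : ℂ) ≠ 0 := by exact_mod_cast hT.ne'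
    simp [hξ]
    field_simp
    norm_num
  · have hc : (ξ * Complex.I : ℂ) ≠ 0 := by simp [hξ]
    have h_int : ∀ T : ℝ, ‖∫ t in (-T)..T, Complex.exp (ξ * t * Complex.I)‖ ≤ 2 / |ξ| := by
      intro T
      simp_rw [mul_right_comm _ _ Complex.I]
      rw [integral_exp_mul_complex hc, norm_div, norm_mul, Complex.norm_I, mul_one,
        Complex.norm_real, Real.norm_eq_abs]
      gcongr
      have h_one : ∀ x : ℝ, ‖Complex.exp (ξ * Complex.I * x)‖ = 1 := fun x => by
        rw [mul_right_comm, ← Complex.ofReal_mul, Complex.norm_exp_ofReal_mul_I]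
      exact (norm_sub_le _ _).trans (by rw [h_one, h_one]; norm_num)
    have h_lim : Tendsto (fun T : ℝ => (2 * T)⁻¹ * (2 / |ξ|)) atTop (𝓝 0) := by
      simpa using (tendsto_inv_atTop_zero.comp (tendsto_id.const_mul_atTop two_pos)).mul_const
        (2 / |ξ|)
    refine squeeze_zero_norm' ?_ h_lim
    filter_upwards [eventually_gt_atTop 0] with T hT
    rw [norm_smul, Real.norm_of_nonneg (by positivity)]
    gcongr
    exact h_int T

noncomputable def dirichletPoly (N : ℕ) (a : ℕ → ℂ) (s : ℂ) : ℂ :=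
  ∑ n ∈ Finset.range N, a n * ((n : ℂ) + 1) ^ (-s)

theorem natCast_add_one_cpow (n : ℕ) (z : ℂ) :
    ((n : ℂ) + 1) ^ z = Complex.exp (Real.log (n + 1) * z) := by
  have hn : (0 : ℝ) < n + 1 := by positivity
  rw [Complex.cpow_def_of_ne_zero (by exact_mod_cast hn.ne'), ← Complex.ofReal_natCast,
    ← Complex.ofReal_one, ← Complex.ofReal_add, ← Complex.ofReal_log hn.le]

theorem norm_natCast_add_one_cpow (n : ℕ) (z : ℂ) :
    ‖((n : ℂ) + 1) ^ z‖ = ((n : ℝ) + 1) ^ z.re := by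
  exact_mod_cast Complex.norm_natCast_cpow_of_pos n.succ_pos z

section DirichletPoly

variable (N : ℕ) (a : ℕ → ℂ)

theorem continuous_dirichletPoly : Continuous (dirichletPoly N a) :=
  continuous_finsetSum _ fun n _ =>
    continuous_const.mul (continuous_neg.const_cpow (Or.inl (Nat.cast_add_one_ne_zero n)))

theorem norm_dirichletPoly_le (s : ℂ) :
    ‖dirichletPoly N a s‖ ≤ ∑ n ∈ Finset.range N, ‖a n‖ * ((n : ℝ) + 1) ^ (-s.re) :=
  (norm_sum_le _ _).trans_eq <| Finset.sum_congr rfl fun n _ => by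
    rw [norm_mul, norm_natCast_add_one_cpow, Complex.neg_re]

theorem norm_dirichletPoly_vertical_le (σ t : ℝ) :
    ‖dirichletPoly N a (σ + t * Complex.I)‖ ≤
      ∑ n ∈ Finset.range N, ‖a n‖ * ((n : ℝ) + 1) ^ (-σ) := by
  simpa using norm_dirichletPoly_le N a (σ + t * Complex.I)

theorem dirichletPoly_mul_cpow_eq_sum_exp (m : ℕ) (σ t : ℝ) :
    dirichletPoly N a (σ + t * Complex.I) * ((m : ℂ) + 1) ^ (t * Complex.I) =
      ∑ n ∈ Finset.range N, a n * ((n : ℂ) + 1) ^ (-(σ : ℂ)) *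
        Complex.exp ((Real.log (m + 1) - Real.log (n + 1) : ℝ) * t * Complex.I) := by
  rw [dirichletPoly, Finset.sum_mul]
  refine Finset.sum_congr rfl fun n _ => ?_
  simp only [natCast_add_one_cpow, mul_assoc, ← Complex.exp_add]
  congr 2
  push_cast
  ring

theorem tendsto_mean_dirichletPoly_mul_cpow {m : ℕ} (hm : m < N) (σ : ℝ) :
    Tendsto (fun T : ℝ => (2 * T)⁻¹ •
        ∫ t in (-T)..T, dirichletPoly N a (σ + t * Complex.I) * ((m : ℂ) + 1) ^ (t * Complex.I))
      atTop (𝓝 (a m * ((m : ℂ) + 1) ^ (-(σ : ℂ)))) := by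
  have h_log : ∀ n : ℕ, Real.log (m + 1) - Real.log (n + 1) = 0 ↔ n = m := fun n => by
    rw [sub_eq_zero, Real.log_injOn_pos.eq_iff (by simp; positivity) (by simp; positivity)]
    norm_cast
    omega
  have h_int : ∀ T : ℝ, ∫ t in (-T)..T, dirichletPoly N a (σ + t * Complex.I) *
      ((m : ℂ) + 1) ^ (t * Complex.I) = ∑ n ∈ Finset.range N, a n * ((n : ℂ) + 1) ^ (-(σ : ℂ)) *
        ∫ t in (-T)..T, Complex.exp ((Real.log (m + 1) - Real.log (n + 1) : ℝ) * t * Complex.I) :=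
    fun T => by
      simp_rw [dirichletPoly_mul_cpow_eq_sum_exp, ← intervalIntegral.integral_const_mul]
      exact intervalIntegral.integral_finsetSum fun n _ =>
        Continuous.intervalIntegrable (by fun_prop) _ _
  simp_rw [h_int, Finset.smul_sum, ← mul_smul_comm]
  convert tendsto_finsetSum (Finset.range N) fun n _ =>
    (tendsto_mean_exp_mul_I (Real.log (m + 1) - Real.log (n + 1))).const_mul
      (a n * ((n : ℂ) + 1) ^ (-(σ : ℂ)))
  rw [Finset.sum_eq_single_of_mem m (Finset.mem_range.2 hm) fun n _ hnm => by
    rw [if_neg (by rwa [h_log]), mul_zero]]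
  simp

end DirichletPoly

noncomputable def truncatedMeanNorm (f : ℂ → ℂ) (σ T : ℝ) : ℝ :=
  (1 / (2 * T)) * ∫ t in (-T)..T, ‖f ((σ : ℂ) + t * Complex.I)‖

noncomputable def verticalMeanNorm (f : ℂ → ℂ) (σ : ℝ) : ℝ :=
  limsup (truncatedMeanNorm f σ) atTop

section VerticalMeanNorm

variable {f : ℂ → ℂ} {σ B : ℝ}

theorem integral_norm_vertical_le (hB : ∀ t : ℝ, ‖f (σ + t * Complex.I)‖ ≤ B) {T : ℝ}
    (hT : 0 ≤ T) : ∫ t in (-T)..T, ‖f (σ + t * Complex.I)‖ ≤ 2 * T * B := by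
  refine (le_abs_self _).trans ?_
  rw [← Real.norm_eq_abs]
  refine (intervalIntegral.norm_integral_le_of_norm_le_const (C := B) fun t _ => ?_).trans_eq ?_
  · simpa using hB t
  · rw [abs_of_nonneg (by linarith)]
    ring

theorem truncatedMeanNorm_mem_Icc (hB : ∀ t : ℝ, ‖f (σ + t * Complex.I)‖ ≤ B) {T : ℝ}
    (hT : 0 < T) : truncatedMeanNorm f σ T ∈ Icc 0 B := by
  constructor
  · exact mul_nonneg (by positivity) (intervalIntegral.integral_nonneg (by linarith)
      fun t _ => norm_nonneg _)
  · rw [truncatedMeanNorm, one_div_mul_eq_div, div_le_iff₀ (by positivity), mul_comm]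
    exact integral_norm_vertical_le hB hT.le

theorem isBoundedUnder_le_truncatedMeanNorm (hB : ∀ t : ℝ, ‖f (σ + t * Complex.I)‖ ≤ B) :
    IsBoundedUnder (· ≤ ·) atTop (truncatedMeanNorm f σ) :=
  isBoundedUnder_of_eventually_le <| (eventually_gt_atTop 0).mono fun _ hT =>
    (truncatedMeanNorm_mem_Icc hB hT).2

theorem isCoboundedUnder_le_truncatedMeanNorm (hB : ∀ t : ℝ, ‖f (σ + t * Complex.I)‖ ≤ B) :
    IsCoboundedUnder (· ≤ ·) atTop (truncatedMeanNorm f σ) :=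
  (isBoundedUnder_of_eventually_ge <| (eventually_gt_atTop 0).mono fun _ hT =>
    (truncatedMeanNorm_mem_Icc hB hT).1).isCoboundedUnder_le

theorem verticalMeanNorm_nonneg (hB : ∀ t : ℝ, ‖f (σ + t * Complex.I)‖ ≤ B) :
    0 ≤ verticalMeanNorm f σ :=
  le_limsup_of_frequently_le
    ((eventually_gt_atTop 0).mono fun _ hT => (truncatedMeanNorm_mem_Icc hB hT).1).frequently
    (isBoundedUnder_le_truncatedMeanNorm hB)

theorem verticalMeanNorm_le (hB : ∀ t : ℝ, ‖f (σ + t * Complex.I)‖ ≤ B) :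
    verticalMeanNorm f σ ≤ B :=
  limsup_le_of_le (isCoboundedUnder_le_truncatedMeanNorm hB)
    ((eventually_gt_atTop 0).mono fun _ hT => (truncatedMeanNorm_mem_Icc hB hT).2)

theorem norm_le_verticalMeanNorm_of_tendsto (hB : ∀ t : ℝ, ‖f (σ + t * Complex.I)‖ ≤ B)
    (hf : Continuous f) {g : ℝ → ℂ} (hg : ∀ t, ‖g t‖ ≤ 1) {L : ℂ}
    (hL : Tendsto (fun T : ℝ => (2 * T)⁻¹ • ∫ t in (-T)..T, f (σ + t * Complex.I) * g t) atTop
      (𝓝 L)) :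
    ‖L‖ ≤ verticalMeanNorm f σ := by
  rw [← hL.norm.limsup_eq]
  refine limsup_le_limsup ?_ hL.norm.isBoundedUnder_ge.isCoboundedUnder_le
    (isBoundedUnder_le_truncatedMeanNorm hB)
  filter_upwards [eventually_gt_atTop 0] with T hT
  rw [norm_smul, Real.norm_of_nonneg (by positivity), truncatedMeanNorm, one_div]
  gcongr
  refine intervalIntegral.norm_integral_le_of_norm_le (by linarith)
    (ae_of_all _ fun t _ => ?_) (Continuous.intervalIntegrable (by fun_prop) _ _)
  simpa using mul_le_mul_of_nonneg_left (hg t) (norm_nonneg (f (σ + t * Complex.I)))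

-- A limsup over real `T` is not obviously measurable in `σ`; one over integer `T` is.
theorem verticalMeanNorm_eq_limsup_nat (hB : ∀ t : ℝ, ‖f (σ + t * Complex.I)‖ ≤ B)
    (hf : Continuous f) :
    verticalMeanNorm f σ = limsup (fun k : ℕ => truncatedMeanNorm f σ k) atTop := by
  have h_half : truncatedMeanNorm f σ =
      fun T => (∫ t in (-T)..T, ‖f (σ + t * Complex.I)‖) / 2 / T :=
    funext fun T => by rw [truncatedMeanNorm]; ring
  rw [verticalMeanNorm, h_half]
  refine limsup_div_eq_limsup_natCast_div (C := B) ?_ (by simp) fun T hT => ?_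
  · intro x (hx : 0 ≤ x) y _ hxy
    dsimp only
    gcongr
    exact intervalIntegral.integral_mono_interval (by linarith) (by linarith) hxy
      (ae_of_all _ fun t => norm_nonneg _) (Continuous.intervalIntegrable (by fun_prop) _ _)
  · linarith [integral_norm_vertical_le hB hT]

theorem measurable_verticalMeanNorm {b : ℝ → ℝ}
    (hb : ∀ σ t : ℝ, ‖f (σ + t * Complex.I)‖ ≤ b σ) (hf : Continuous f) :
    Measurable (verticalMeanNorm f) := by
  simp_rw [funext fun σ => verticalMeanNorm_eq_limsup_nat (hb σ) hf]
  refine Measurable.limsup fun k => (continuous_const.mul ?_).measurable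
  exact intervalIntegral.continuous_parametric_intervalIntegral_of_continuous'
    (f := fun σ t : ℝ => ‖f (σ + t * Complex.I)‖) (by fun_prop) _ _

end VerticalMeanNorm

theorem setIntegral_pos_of_forall_mem_pos {X : Type*} [MeasurableSpace X] {μ : Measure X}
    {f : X → ℝ} {s : Set X} (hs : MeasurableSet s) (hμs : μ s ≠ 0) (hf : IntegrableOn f s μ)
    (hpos : ∀ x ∈ s, 0 < f x) : 0 < ∫ x in s, f x ∂μ := by
  rw [setIntegral_pos_iff_support_of_nonneg_ae
    (ae_restrict_of_forall_mem hs fun x hx => (hpos x hx).le) hf]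
  exact (pos_iff_ne_zero.2 hμs).trans_le (measure_mono fun x hx => ⟨(hpos x hx).ne', hx⟩)

noncomputable def weight (h : ℝ → ℝ) (n : ℕ) : ℝ :=
  ∫ σ in Ioi (0 : ℝ), ((n : ℝ) + 1) ^ (-(2 : ℝ) * σ) * h σ

section Weight

variable {h : ℝ → ℝ}

theorem integrableOn_weight_integrand (hh : IntegrableOn h (Ioi 0)) (n : ℕ) :
    IntegrableOn (fun σ => ((n : ℝ) + 1) ^ (-(2 : ℝ) * σ) * h σ) (Ioi 0) := by
  refine hh.bdd_mul (c := 1) (Continuous.aestronglyMeasurable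
    (continuous_const.rpow (by fun_prop) fun _ => Or.inl (by positivity))) ?_
  refine ae_restrict_of_forall_mem measurableSet_Ioi fun σ (hσ : 0 < σ) => ?_
  rw [Real.norm_of_nonneg (by positivity)]
  exact Real.rpow_le_one_of_one_le_of_nonpos (by simp) (by linarith)

theorem setIntegral_Ioc_mul_rpow_le_weight (hh : IntegrableOn h (Ioi 0))
    (hpos : ∀ σ ∈ Ioi (0 : ℝ), 0 < h σ) (ε : ℝ) (n : ℕ) :
    (∫ σ in Ioc 0 ε, h σ) * ((n : ℝ) + 1) ^ (-(2 : ℝ) * ε) ≤ weight h n := by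
  rw [← integral_mul_const]
  calc ∫ σ in Ioc 0 ε, h σ * ((n : ℝ) + 1) ^ (-(2 : ℝ) * ε)
      ≤ ∫ σ in Ioc 0 ε, ((n : ℝ) + 1) ^ (-(2 : ℝ) * σ) * h σ := by
        refine setIntegral_mono_on ((hh.mono_set Ioc_subset_Ioi_self).mul_const _)
          ((integrableOn_weight_integrand hh n).mono_set Ioc_subset_Ioi_self) measurableSet_Ioc
          fun σ hσ => ?_
        rw [mul_comm]
        exact mul_le_mul_of_nonneg_right
          (Real.rpow_le_rpow_of_exponent_le (by simp) (by linarith [hσ.2])) (hpos σ hσ.1).le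
    _ ≤ weight h n := by
        refine setIntegral_mono_set (integrableOn_weight_integrand hh n)
          (ae_restrict_of_forall_mem measurableSet_Ioi fun σ hσ => ?_)
          Ioc_subset_Ioi_self.eventuallyLE
        exact mul_nonneg (by positivity) (hpos σ hσ).le

theorem setIntegral_Ioc_pos (hh : IntegrableOn h (Ioi 0)) (hpos : ∀ σ ∈ Ioi (0 : ℝ), 0 < h σ)
    {ε : ℝ} (hε : 0 < ε) : 0 < ∫ σ in Ioc 0 ε, h σ :=
  setIntegral_pos_of_forall_mem_pos measurableSet_Ioc (by simp [hε])
    (hh.mono_set Ioc_subset_Ioi_self) fun σ hσ => hpos σ hσ.1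

theorem weight_pos (hh : IntegrableOn h (Ioi 0)) (hpos : ∀ σ ∈ Ioi (0 : ℝ), 0 < h σ) (n : ℕ) :
    0 < weight h n :=
  (mul_pos (setIntegral_Ioc_pos hh hpos one_pos) (by positivity)).trans_le
    (setIntegral_Ioc_mul_rpow_le_weight hh hpos 1 n)

theorem summable_rpow_neg_div_weight (hh : IntegrableOn h (Ioi 0))
    (hpos : ∀ σ ∈ Ioi (0 : ℝ), 0 < h σ) {p : ℝ} (hp : 1 < p) :
    Summable fun n : ℕ => ((n : ℝ) + 1) ^ (-p) / weight h n := by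
  set ε := (p - 1) / 4
  set c := ∫ σ in Ioc 0 ε, h σ
  have hc : 0 < c := setIntegral_Ioc_pos hh hpos (by positivity)
  have h_pser : Summable fun n : ℕ => ((n : ℝ) + 1) ^ (-(p - 2 * ε)) := by
    have hexp : -(p - 2 * ε) < -1 := by simp only [ε]; linarith
    simpa using (summable_nat_add_iff 1).2 (Real.summable_nat_rpow.2 hexp)
  refine (h_pser.div_const c).of_nonneg_of_le
    (fun n => (div_pos (by positivity) (weight_pos hh hpos n)).le) fun n => ?_
  calc ((n : ℝ) + 1) ^ (-p) / weight h n
      ≤ ((n : ℝ) + 1) ^ (-p) / (c * ((n : ℝ) + 1) ^ (-(2 : ℝ) * ε)) :=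
        div_le_div_of_nonneg_left (by positivity) (by positivity)
          (setIntegral_Ioc_mul_rpow_le_weight hh hpos ε n)
    _ = ((n : ℝ) + 1) ^ (-(p - 2 * ε)) / c := by
        rw [show -(p - 2 * ε) = -p - -(2 : ℝ) * ε by ring, Real.rpow_sub (by positivity),
          div_div, mul_comm]

theorem norm_mul_weight_le_integral_verticalMeanNorm (hh : IntegrableOn h (Ioi 0))
    (hpos : ∀ σ ∈ Ioi (0 : ℝ), 0 < h σ) (N : ℕ) (a : ℕ → ℂ) {m : ℕ} (hm : m < N) :
    ‖a m‖ * weight h m ≤ ∫ σ in Ioi 0, verticalMeanNorm (dirichletPoly N a) σ * h σ := by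
  have hbound := norm_dirichletPoly_vertical_le N a
  have hM_int : IntegrableOn (fun σ => verticalMeanNorm (dirichletPoly N a) σ * h σ) (Ioi 0) := by
    refine hh.bdd_mul (c := ∑ n ∈ Finset.range N, ‖a n‖)
      (measurable_verticalMeanNorm hbound (continuous_dirichletPoly N a)).aestronglyMeasurable ?_
    refine ae_restrict_of_forall_mem measurableSet_Ioi fun σ (hσ : 0 < σ) => ?_
    rw [Real.norm_of_nonneg (verticalMeanNorm_nonneg (hbound σ))]
    refine (verticalMeanNorm_le (hbound σ)).trans (Finset.sum_le_sum fun n _ => ?_)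
    exact mul_le_of_le_one_right (norm_nonneg _)
      (Real.rpow_le_one_of_one_le_of_nonpos (by simp) (by linarith))
  rw [weight, ← integral_const_mul]
  refine setIntegral_mono_on ((integrableOn_weight_integrand hh m).const_mul _) hM_int
    measurableSet_Ioi fun σ (hσ : 0 < σ) => ?_
  rw [← mul_assoc]
  refine mul_le_mul_of_nonneg_right ?_ (hpos σ hσ).le
  calc ‖a m‖ * ((m : ℝ) + 1) ^ (-(2 : ℝ) * σ) ≤ ‖a m‖ * ((m : ℝ) + 1) ^ (-σ) := by
        gcongr
        · simp
        · linarith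
    _ = ‖a m * ((m : ℂ) + 1) ^ (-(σ : ℂ))‖ := by
        rw [norm_mul, norm_natCast_add_one_cpow]
        simp
    _ ≤ verticalMeanNorm (dirichletPoly N a) σ :=
        norm_le_verticalMeanNorm_of_tendsto (hbound σ) (continuous_dirichletPoly N a)
          (g := fun t : ℝ => ((m : ℂ) + 1) ^ ((t : ℂ) * Complex.I))
          (fun t => by rw [norm_natCast_add_one_cpow]; simp)
          (tendsto_mean_dirichletPoly_mul_cpow N a hm σ)

end Weight

theorem dirichlet_polynomial_pointwise_bound_general
    (h : ℝ → ℝ)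
    (hh_pos : ∀ σ ∈ Set.Ioi (0:ℝ), 0 < h σ)
    (hh_int : ∫ σ in Set.Ioi (0:ℝ), h σ = 1)
    (w : ℕ → ℝ)
    (hw : ∀ n : ℕ, w n = ∫ σ in Set.Ioi (0:ℝ), ((n:ℝ)+1) ^ (-(2:ℝ)*σ) * h σ)
    (N : ℕ) (a : ℕ → ℂ) (P : ℂ → ℂ)
    (hP : ∀ s : ℂ, P s = ∑ n ∈ Finset.range N, a n * ((n:ℂ)+1) ^ (-s))
    (s : ℂ) (hs : 1 < s.re) :
    ‖P s‖ ≤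
      (∫ σ in Set.Ioi (0:ℝ),
        (limsup (fun T : ℝ =>
          (1/(2*T)) * ∫ t in (-T)..T, ‖P ((σ:ℂ) + t * Complex.I)‖) atTop) * h σ)
      * ∑' n : ℕ, ((n:ℝ)+1) ^ (-s.re) / w n := by
  obtain rfl : w = weight h := funext hw
  obtain rfl : P = dirichletPoly N a := funext hP
  have hh : IntegrableOn h (Ioi 0) := .of_integral_ne_zero (hh_int ▸ one_ne_zero)
  change _ ≤ (∫ σ in Ioi 0, verticalMeanNorm (dirichletPoly N a) σ * h σ) * _
  set I := ∫ σ in Ioi 0, verticalMeanNorm (dirichletPoly N a) σ * h σ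
  have hI : 0 ≤ I := setIntegral_nonneg measurableSet_Ioi fun σ hσ =>
    mul_nonneg (verticalMeanNorm_nonneg (norm_dirichletPoly_vertical_le N a σ)) (hh_pos σ hσ).le
  calc ‖dirichletPoly N a s‖ ≤ ∑ m ∈ Finset.range N, ‖a m‖ * ((m : ℝ) + 1) ^ (-s.re) :=
        norm_dirichletPoly_le N a s
    _ ≤ ∑ m ∈ Finset.range N, I / weight h m * ((m : ℝ) + 1) ^ (-s.re) := by
        gcongr with m hm
        exact (le_div_iff₀ (weight_pos hh hh_pos m)).2
          (norm_mul_weight_le_integral_verticalMeanNorm hh hh_pos N a (Finset.mem_range.1 hm))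
    _ = I * ∑ m ∈ Finset.range N, ((m : ℝ) + 1) ^ (-s.re) / weight h m := by
        rw [Finset.mul_sum]
        exact Finset.sum_congr rfl fun _ _ => by ring
    _ ≤ I * ∑' n : ℕ, ((n : ℝ) + 1) ^ (-s.re) / weight h n := by
        gcongr
        exact (summable_rpow_neg_div_weight hh hh_pos hs).sum_le_tsum _ fun n _ =>
          (div_pos (by positivity) (weight_pos hh hh_pos n)).le

/-- Pointwise bound for Dirichlet polynomials: `|P(s)| ≤ ‖P‖_{A_μ¹} · ∑_{n≥1} n^{-Re s}/w_h(n)`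
for `Re s > 1`. -/
theorem dirichlet_polynomial_pointwise_bound
    (h : ℝ → ℝ)
    (hh_pos : ∀ σ ∈ Set.Ioi (0:ℝ), 0 < h σ)
    (hh_cont : ContinuousOn h (Set.Ioi 0))
    (hh_int : ∫ σ in Set.Ioi (0:ℝ), h σ = 1)
    (w : ℕ → ℝ)
    (hw : ∀ n : ℕ, w n = ∫ σ in Set.Ioi (0:ℝ), ((n:ℝ)+1) ^ (-(2:ℝ)*σ) * h σ)
    (N : ℕ) (a : ℕ → ℂ) (P : ℂ → ℂ)
    (hP : ∀ s : ℂ, P s = ∑ n ∈ Finset.range N, a n * ((n:ℂ)+1) ^ (-s))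
    (s : ℂ) (hs : 1 < s.re) :
    ‖P s‖ ≤
      (∫ σ in Set.Ioi (0:ℝ),
        (limsup (fun T : ℝ =>
          (1/(2*T)) * ∫ t in (-T)..T, ‖P ((σ:ℂ) + t * Complex.I)‖) atTop) * h σ)
      * ∑' n : ℕ, ((n:ℝ)+1) ^ (-s.re) / w n :=
  dirichlet_polynomial_pointwise_bound_general h hh_pos hh_int w hw N a P hP s hs
end

section
/- Let c₀ ≥ 1 be an integer and let φ(s) = ∑_{n≥1} c_n n^{-s} be a Dirichlet series converging uniformly on ℂ_ε for every ε > 0, such that Re φ(s) ≥ 0 for all s ∈ ℂ₊. Set Φ(s) = c₀ s + φ(s). If Φ is not a vertical translation (i.e., there is no τ ∈ ℝ with Φ(s) = s + iτ for all s ∈ ℂ₊), then for every ε > 0 there exists η > 0 such that Φ(ℂ_ε) ⊆ ℂ_{ε+η}. -/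
/-!
For `c₀ ≥ 2` the claim is immediate from `Re Φ s ≥ 2 Re s`. For `c₀ = 1` it suffices to bound
`Re φ` from below on `ℂ_ε`. Since the coefficients of `φ` grow at most polynomially,
`φ s = c 0 + O(2^{-Re s})` uniformly as `Re s → ∞`. Harnack's inequality for the nonnegative
harmonic function `Re φ`, applied on discs tangent to the imaginary axis, compares `Re φ s` with
`Re φ (s + t)`, losing only a factor linear in `t`. If `Re (c 0) > 0` this propagates the lower
bound `Re φ ≥ Re (c 0) / 2` from a far half-plane to all of `ℂ_ε`. If `Re (c 0) = 0`, the
exponential decay beats the linear loss and forces `Re φ = 0` on `ℂ₊`; by the open mapping theorem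
`φ` is then an imaginary constant, i.e. `Φ` is a vertical translation.
-/

open Filter Topology Metric

open ComplexConjugate in
lemma Complex.norm_sub_lt_norm_add_conj {w a : ℂ} (hw : 0 < w.re) (ha : 0 < a.re) :
    ‖w - a‖ < ‖w + conj a‖ := by
  rw [← sq_lt_sq₀ (norm_nonneg _) (norm_nonneg _), Complex.sq_norm, Complex.sq_norm,
    Complex.normSq_apply, Complex.normSq_apply]
  simp only [Complex.sub_re, Complex.sub_im, Complex.add_re, Complex.add_im, Complex.conj_re,
    Complex.conj_im]
  nlinarith [mul_pos hw ha]

open ComplexConjugate in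
lemma Complex.abs_re_sub_re_le_of_norm_sub_le {w a : ℂ} {ρ : ℝ} (hρ₀ : 0 ≤ ρ) (hρ₁ : ρ ≤ 1)
    (hw : 0 ≤ w.re) (ha : 0 ≤ a.re) (h : ‖w - a‖ ≤ ρ * ‖w + conj a‖) :
    |w.re - a.re| ≤ ρ * (w.re + a.re) := by
  have hsq := pow_le_pow_left₀ (norm_nonneg _) h 2
  rw [mul_pow, Complex.sq_norm, Complex.sq_norm, Complex.normSq_apply,
    Complex.normSq_apply] at hsq
  simp only [Complex.sub_re, Complex.sub_im, Complex.add_re, Complex.add_im, Complex.conj_re,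
    Complex.conj_im] at hsq
  refine abs_le_of_sq_le_sq ?_ (by positivity)
  nlinarith [mul_nonneg (sub_nonneg.2 (pow_le_one₀ hρ₀ hρ₁ (n := 2))) (sq_nonneg (w.im - a.im))]

open ComplexConjugate in
lemma harnack_ball_of_re_pos {f : ℂ → ℂ} {z₀ z : ℂ} {R : ℝ}
    (hd : DifferentiableOn ℂ f (ball z₀ R))
    (hpos : ∀ w ∈ ball z₀ R, 0 < (f w).re) (hz : z ∈ ball z₀ R) :
    |(f z).re - (f z₀).re| ≤ dist z z₀ / R * ((f z).re + (f z₀).re) := by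
  have hR : 0 < R := pos_of_mem_ball hz
  set a := f z₀
  have ha : 0 < a.re := hpos z₀ (mem_ball_self hR)
  have hden : ∀ w ∈ ball z₀ R, 0 < ‖f w + conj a‖ := fun w hw =>
    (norm_nonneg _).trans_lt (Complex.norm_sub_lt_norm_add_conj (hpos w hw) ha)
  -- the Cayley transform sends the right half-plane onto the unit disc and `a` to `0`
  set h : ℂ → ℂ := fun w => (f w - a) / (f w + conj a)
  have hmaps : Set.MapsTo h (ball z₀ R) (closedBall (h z₀) 1) := by
    intro w hw
    simp only [h, a, sub_self, zero_div, mem_closedBall, dist_zero_right, norm_div]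
    exact (div_le_one (hden w hw)).2 (Complex.norm_sub_lt_norm_add_conj (hpos w hw) ha).le
  have hhd : DifferentiableOn ℂ h (ball z₀ R) :=
    (hd.sub_const a).div (hd.add_const _) fun w hw => norm_pos_iff.1 (hden w hw)
  have hschwarz := Complex.dist_le_div_mul_dist_of_mapsTo_ball hhd hmaps hz
  simp only [h, a, sub_self, zero_div, dist_zero_right, norm_div] at hschwarz
  rw [div_le_iff₀ (hden z hz), one_div_mul_eq_div] at hschwarz
  exact Complex.abs_re_sub_re_le_of_norm_sub_le (by positivity)
    ((div_le_one hR).2 (mem_ball.1 hz).le) (hpos z hz).le ha.le hschwarz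

lemma harnack_ball {f : ℂ → ℂ} {z₀ z : ℂ} {R : ℝ} (hd : DifferentiableOn ℂ f (ball z₀ R))
    (hpos : ∀ w ∈ ball z₀ R, 0 ≤ (f w).re) (hz : z ∈ ball z₀ R) :
    |(f z).re - (f z₀).re| ≤ dist z z₀ / R * ((f z).re + (f z₀).re) := by
  refine le_of_forall_pos_le_add fun μ hμ => ?_
  have := harnack_ball_of_re_pos (f := fun w => f w + (μ / 2 : ℝ)) (hd.add_const _)
    (fun w hw => by simp only [Complex.add_re, Complex.ofReal_re]; linarith [hpos w hw]) hz
  simp only [Complex.add_re, Complex.ofReal_re, add_sub_add_right_eq_sub] at this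
  have hρ : dist z z₀ / R ≤ 1 := (div_le_one (pos_of_mem_ball hz)).2 (mem_ball.1 hz).le
  nlinarith [div_nonneg (dist_nonneg (x := z) (y := z₀)) (pos_of_mem_ball hz).le]

lemma ball_subset_re_pos {z : ℂ} {R : ℝ} (h : R ≤ z.re) : ball z R ⊆ {w : ℂ | 0 < w.re} := by
  intro w hw
  have := (Complex.abs_re_le_norm (w - z)).trans_lt (mem_ball_iff_norm.1 hw)
  rw [Complex.sub_re] at this
  simp only [Set.mem_ofPred_eq]
  linarith [neg_abs_le (w.re - z.re)]

lemma harnack_horizontal {f : ℂ → ℂ} (hd : DifferentiableOn ℂ f {s | 0 < s.re})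
    (hpos : ∀ s : ℂ, 0 < s.re → 0 ≤ (f s).re) {s : ℂ} (hs : 0 < s.re) {t : ℝ} (ht : 0 ≤ t) :
    s.re * (f (s + t)).re ≤ (s.re + 2 * t) * (f s).re ∧
      s.re * (f s).re ≤ (s.re + 2 * t) * (f (s + t)).re := by
  have hball : ball (s + t) (s.re + t) ⊆ {w : ℂ | 0 < w.re} := ball_subset_re_pos (by simp)
  have hdist : dist s (s + t) = t := by
    rw [dist_eq_norm, sub_add_cancel_left, norm_neg, Complex.norm_real, Real.norm_of_nonneg ht]
  have hmem : s ∈ ball (s + t) (s.re + t) := by rw [mem_ball, hdist]; linarith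
  have h := harnack_ball (hd.mono hball) (fun w hw => hpos w (hball hw)) hmem
  rw [hdist, div_mul_eq_mul_div, abs_sub_le_iff, le_div_iff₀ (by linarith),
    le_div_iff₀ (by linarith)] at h
  constructor <;> nlinarith [h.1, h.2]

lemma eqOn_const_of_re_nonneg_of_re_eq_zero {f : ℂ → ℂ} {U : Set ℂ} (hU : IsOpen U)
    (hU' : IsPreconnected U) (hd : DifferentiableOn ℂ f U) (hpos : ∀ z ∈ U, 0 ≤ (f z).re)
    {z₀ : ℂ} (hz₀ : z₀ ∈ U) (h0 : (f z₀).re = 0) : Set.EqOn f (fun _ => f z₀) U := by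
  rcases (hd.analyticOnNhd hU).is_constant_or_isOpen hU' with ⟨w, hw⟩ | hopen
  · exact fun z hz => (hw z hz).trans (hw z₀ hz₀).symm
  -- otherwise the open image around `f z₀ ∈ iℝ` contains points with negative real part
  obtain ⟨r, hr, hball⟩ := Metric.isOpen_iff.1 (hopen U le_rfl hU) (f z₀) ⟨z₀, hz₀, rfl⟩
  have hmem : f z₀ - (r / 2 : ℝ) ∈ ball (f z₀) r := by
    rw [mem_ball, dist_eq_norm, sub_sub_cancel_left, norm_neg, Complex.norm_real,
      Real.norm_of_nonneg (by positivity)]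
    linarith
  obtain ⟨z, hz, hfz⟩ := hball hmem
  have := hpos z hz
  rw [hfz, Complex.sub_re, h0, Complex.ofReal_re] at this
  linarith

lemma tendsto_two_rpow_neg_atTop : Tendsto (fun x : ℝ => (2 : ℝ) ^ (-x)) atTop (𝓝 0) := by
  simpa only [Real.rpow_neg zero_le_two, Real.inv_rpow zero_le_two] using
    tendsto_rpow_atTop_of_base_lt_one 2⁻¹ (by norm_num) (by norm_num)

lemma re_eq_zero_of_re_le_two_rpow_neg {f : ℂ → ℂ} (hd : DifferentiableOn ℂ f {s | 0 < s.re})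
    (hpos : ∀ s : ℂ, 0 < s.re → 0 ≤ (f s).re) {K X : ℝ}
    (hK : ∀ w : ℂ, X ≤ w.re → (f w).re ≤ K * 2 ^ (-w.re)) {s : ℂ} (hs : 0 < s.re) :
    (f s).re = 0 := by
  refine le_antisymm ?_ (hpos s hs)
  -- the decay `2 ^ (-n)` of `Re f (s + n)` beats the linear loss `s.re + 2n` of Harnack
  have hbound : ∀ n : ℕ, X ≤ s.re + n →
      s.re * (f s).re ≤ K * 2 ^ (-s.re) * (s.re * 2⁻¹ ^ n + 2 * (n * 2⁻¹ ^ n)) := by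
    intro n hn
    have h := (harnack_horizontal hd hpos hs n.cast_nonneg).2
    have hdecay := hK (s + (n : ℝ)) (by simpa using hn)
    rw [Complex.add_re, Complex.ofReal_re, neg_add, Real.rpow_add two_pos,
      Real.rpow_neg zero_le_two (n : ℝ), Real.rpow_natCast, ← inv_pow] at hdecay
    calc s.re * (f s).re ≤ (s.re + 2 * n) * (f (s + (n : ℝ))).re := h
      _ ≤ (s.re + 2 * n) * (K * (2 ^ (-s.re) * 2⁻¹ ^ n)) := by gcongr
      _ = _ := by ring
  have hlim : Tendsto (fun n : ℕ => K * 2 ^ (-s.re) * (s.re * (2⁻¹ : ℝ) ^ n +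
      2 * (n * 2⁻¹ ^ n))) atTop (𝓝 0) := by
    have hgeom := tendsto_pow_atTop_nhds_zero_of_lt_one (r := (2⁻¹ : ℝ)) (by norm_num) (by norm_num)
    have hlin := tendsto_self_mul_const_pow_of_lt_one (r := (2⁻¹ : ℝ)) (by norm_num) (by norm_num)
    simpa only [mul_zero, add_zero] using
      ((hgeom.const_mul s.re).add (hlin.const_mul 2)).const_mul (K * 2 ^ (-s.re))
  have := ge_of_tendsto hlim (eventually_atTop.2 ⟨⌈X⌉₊, fun n hn => hbound n ?_⟩)
  · exact nonpos_of_mul_nonpos_right this hs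
  · have := (Nat.ceil_le.1 hn); linarith

lemma exists_pos_le_re_of_le_re {f : ℂ → ℂ} (hd : DifferentiableOn ℂ f {s | 0 < s.re})
    (hpos : ∀ s : ℂ, 0 < s.re → 0 ≤ (f s).re) {M δ : ℝ} (hδ : 0 < δ)
    (hM : ∀ w : ℂ, M ≤ w.re → δ ≤ (f w).re) {ε : ℝ} (hε : 0 < ε) :
    ∃ η > 0, ∀ s : ℂ, ε < s.re → η ≤ (f s).re := by
  set M' := max M ε
  have hM' : 0 < M' := hε.trans_le (le_max_right _ _)
  refine ⟨ε * δ / (2 * M'), by positivity, fun s hs => ?_⟩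
  rw [div_le_iff₀ (by positivity)]
  rcases le_or_gt M' s.re with hsM | hsM
  · have := hM s ((le_max_left _ _).trans hsM)
    nlinarith [le_max_right M ε]
  · have hs : 0 < s.re := hε.trans hs
    have h := (harnack_horizontal hd hpos hs (sub_nonneg.2 hsM.le)).1
    have hδ' := hM (s + ↑(M' - s.re)) (by
      simp only [Complex.add_re, Complex.ofReal_re, add_sub_cancel]; exact le_max_left M ε)
    nlinarith [hpos s hs]

noncomputable def dirichletPartialSum (c : ℕ → ℂ) (N : ℕ) (s : ℂ) : ℂ :=
  ∑ n ∈ Finset.range N, c n * ((n : ℂ) + 1) ^ (-s)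

lemma norm_mul_natCast_add_one_cpow_neg (a : ℂ) (n : ℕ) (s : ℂ) :
    ‖a * ((n : ℂ) + 1) ^ (-s)‖ = ‖a‖ * ((n : ℝ) + 1) ^ (-s.re) := by
  rw [norm_mul, ← Nat.cast_add_one, Complex.norm_natCast_cpow_of_pos n.succ_pos, Complex.neg_re,
    Nat.cast_add_one]

lemma exists_norm_le_mul_rpow_of_tendsto_dirichletPartialSum {c : ℕ → ℂ} {s₀ L : ℂ}
    (hL : Tendsto (fun N => dirichletPartialSum c N s₀) atTop (𝓝 L)) :
    ∃ B : ℝ, ∀ n, ‖c n‖ ≤ B * ((n : ℝ) + 1) ^ s₀.re := by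
  have hterm : Tendsto (fun n => ‖c n * ((n : ℂ) + 1) ^ (-s₀)‖) atTop (𝓝 0) := by
    have := ((hL.comp (tendsto_add_atTop_nat 1)).sub hL).norm
    simpa [dirichletPartialSum, Finset.sum_range_succ] using this
  obtain ⟨B, hB⟩ := hterm.bddAbove_range
  refine ⟨B, fun n => ?_⟩
  have h := hB (Set.mem_range_self n)
  rw [norm_mul_natCast_add_one_cpow_neg, Real.rpow_neg (by positivity),
    ← div_eq_mul_inv, div_le_iff₀ (by positivity)] at h
  exact h

lemma exists_norm_sub_le_mul_two_rpow_neg {c : ℕ → ℂ} {B a : ℝ}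
    (hB : ∀ n, ‖c n‖ ≤ B * ((n : ℝ) + 1) ^ a) :
    ∃ K : ℝ, ∀ s L : ℂ, a + 2 ≤ s.re →
      Tendsto (fun N => dirichletPartialSum c N s) atTop (𝓝 L) → ‖L - c 0‖ ≤ K * 2 ^ (-s.re) := by
  have hsum : Summable fun n : ℕ => (((n : ℝ) + 2) ^ 2)⁻¹ := by
    have := (summable_nat_add_iff 2).2 (Real.summable_nat_pow_inv.2 one_lt_two)
    exact_mod_cast this
  set T := ∑' n : ℕ, (((n : ℝ) + 2) ^ 2)⁻¹
  refine ⟨B * 2 ^ (a + 2) * T, fun s L hs hL => ?_⟩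
  have hB0 : 0 ≤ B := by simpa using (norm_nonneg _).trans (hB 0)
  have hterm : ∀ n : ℕ, ‖c (n + 1) * (((n + 1 : ℕ) : ℂ) + 1) ^ (-s)‖ ≤
      B * 2 ^ (a + 2) * 2 ^ (-s.re) * (((n : ℝ) + 2) ^ 2)⁻¹ := by
    intro n
    have hn : (0 : ℝ) < n + 2 := by positivity
    have hmono : ((n : ℝ) + 2) ^ (a + 2 - s.re) ≤ 2 ^ (a + 2 - s.re) :=
      Real.rpow_le_rpow_of_nonpos two_pos (by linarith [n.cast_nonneg (α := ℝ)]) (by linarith)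
    rw [norm_mul_natCast_add_one_cpow_neg, Nat.cast_add_one, add_assoc, one_add_one_eq_two]
    calc ‖c (n + 1)‖ * ((n : ℝ) + 2) ^ (-s.re)
        ≤ B * ((n : ℝ) + 2) ^ a * ((n : ℝ) + 2) ^ (-s.re) := by
          gcongr
          simpa [add_assoc, one_add_one_eq_two] using hB (n + 1)
      _ = B * ((n : ℝ) + 2) ^ (a + 2 - s.re) * (((n : ℝ) + 2) ^ 2)⁻¹ := by
          rw [sub_eq_add_neg, Real.rpow_add hn, Real.rpow_add hn, Real.rpow_two]
          field_simp
      _ ≤ B * 2 ^ (a + 2 - s.re) * (((n : ℝ) + 2) ^ 2)⁻¹ := by gcongr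
      _ = B * 2 ^ (a + 2) * 2 ^ (-s.re) * (((n : ℝ) + 2) ^ 2)⁻¹ := by
          rw [sub_eq_add_neg, Real.rpow_add two_pos]; ring
  have hpartial : ∀ N,
      ‖dirichletPartialSum c (N + 1) s - c 0‖ ≤ B * 2 ^ (a + 2) * T * 2 ^ (-s.re) := by
    intro N
    rw [dirichletPartialSum, Finset.sum_range_succ', Nat.cast_zero, zero_add, Complex.one_cpow,
      mul_one, add_sub_cancel_right]
    calc _ ≤ ∑ n ∈ Finset.range N, B * 2 ^ (a + 2) * 2 ^ (-s.re) * (((n : ℝ) + 2) ^ 2)⁻¹ :=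
          (norm_sum_le _ _).trans (Finset.sum_le_sum fun n _ => hterm n)
      _ ≤ B * 2 ^ (a + 2) * 2 ^ (-s.re) * T := by
          rw [← Finset.mul_sum]
          gcongr
          exact hsum.sum_le_tsum _ fun n _ => by positivity
      _ = _ := by ring
  exact le_of_tendsto (((hL.comp (tendsto_add_atTop_nat 1)).sub_const (c 0)).norm)
    (Eventually.of_forall hpartial)

lemma differentiableOn_of_tendstoUniformlyOn_dirichletPartialSum {c : ℕ → ℂ} {φ : ℂ → ℂ}
    (hφ : ∀ ε > (0 : ℝ), TendstoUniformlyOn (dirichletPartialSum c) φ atTop {s : ℂ | ε < s.re}) :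
    DifferentiableOn ℂ φ {s | 0 < s.re} := by
  intro s hs
  have hU : IsOpen {z : ℂ | s.re / 2 < z.re} := isOpen_lt continuous_const Complex.continuous_re
  have hpartial : ∀ N, DifferentiableOn ℂ (dirichletPartialSum c N) {z : ℂ | s.re / 2 < z.re} :=
    fun N => Differentiable.differentiableOn <| Differentiable.fun_sum fun n _ =>
      (differentiable_id.neg.const_cpow (Or.inl (Nat.cast_add_one_ne_zero n))).const_mul (c n)
  have hdiff := (hφ _ (half_pos hs)).tendstoLocallyUniformlyOn.differentiableOn
    (Eventually.of_forall hpartial) hU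
  exact (hdiff.differentiableAt (hU.mem_nhds (half_lt_self (a := s.re) hs))).differentiableWithinAt

lemma exists_norm_sub_le_of_tendstoUniformlyOn_dirichletPartialSum {c : ℕ → ℂ} {φ : ℂ → ℂ}
    (hφ : ∀ ε > (0 : ℝ), TendstoUniformlyOn (dirichletPartialSum c) φ atTop {s : ℂ | ε < s.re}) :
    ∃ K X : ℝ, ∀ s : ℂ, X ≤ s.re → ‖φ s - c 0‖ ≤ K * 2 ^ (-s.re) := by
  have hconv : ∀ s : ℂ, 0 < s.re →
      Tendsto (fun N => dirichletPartialSum c N s) atTop (𝓝 (φ s)) := fun s hs =>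
    (hφ _ (half_pos hs)).tendsto_at (half_lt_self hs)
  obtain ⟨B, hB⟩ := exists_norm_le_mul_rpow_of_tendsto_dirichletPartialSum (hconv 1 one_pos)
  obtain ⟨K, hK⟩ := exists_norm_sub_le_mul_two_rpow_neg hB
  exact ⟨K, 3, fun s hs => hK s _ (by norm_num; linarith) (hconv s (by linarith))⟩

lemma exists_pos_le_re_of_norm_sub_le {f : ℂ → ℂ} (hd : DifferentiableOn ℂ f {s | 0 < s.re})
    (hpos : ∀ s : ℂ, 0 < s.re → 0 ≤ (f s).re) {a : ℂ} {K X : ℝ}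
    (hdecay : ∀ w : ℂ, X ≤ w.re → ‖f w - a‖ ≤ K * 2 ^ (-w.re))
    (hnc : ¬ ∃ τ : ℝ, ∀ s : ℂ, 0 < s.re → f s = τ * Complex.I) {ε : ℝ} (hε : 0 < ε) :
    ∃ η > 0, ∀ s : ℂ, ε < s.re → η ≤ (f s).re := by
  have hre : ∀ w : ℂ, X ≤ w.re → a.re - K * 2 ^ (-w.re) ≤ (f w).re ∧
      (f w).re ≤ a.re + K * 2 ^ (-w.re) := fun w hw => by
    have := (Complex.abs_re_le_norm (f w - a)).trans (hdecay w hw)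
    rw [Complex.sub_re, abs_le] at this
    constructor <;> linarith [this.1, this.2]
  by_cases ha : 0 < a.re
  · have hlim : Tendsto (fun x : ℝ => K * 2 ^ (-x)) atTop (𝓝 0) := by
      simpa using tendsto_two_rpow_neg_atTop.const_mul K
    obtain ⟨M, hM⟩ := eventually_atTop.1 (hlim.eventually (ge_mem_nhds (half_pos ha)))
    refine exists_pos_le_re_of_le_re hd hpos (half_pos ha) (M := max M X) (fun w hw => ?_) hε
    linarith [(hre w ((le_max_right _ _).trans hw)).1, hM w.re ((le_max_left _ _).trans hw)]
  · have h1 : (f 1).re = 0 := re_eq_zero_of_re_le_two_rpow_neg hd hpos (K := K) (X := X)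
      (fun w hw => by linarith [(hre w hw).2, not_lt.1 ha]) one_pos
    have hconst := eqOn_const_of_re_nonneg_of_re_eq_zero
      (isOpen_lt continuous_const Complex.continuous_re) (convex_halfSpace_re_gt 0).isPreconnected
      hd hpos (by simp) h1
    refine absurd ⟨(f 1).im, fun s hs => ?_⟩ hnc
    rw [hconst hs, ← Complex.re_add_im (f 1), h1]
    simp

/-- If a symbol `Φ = c₀ s + φ` with `c₀ ≥ 1` is not a vertical translation, then for every
`ε > 0` there exists `η > 0` such that `Φ(ℂ_ε) ⊆ ℂ_{ε+η}`. -/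
theorem symbol_strict_halfplane_shift
    (c₀ : ℕ) (hc₀ : 1 ≤ c₀) (c : ℕ → ℂ) (φ Φ : ℂ → ℂ)
    (hφ : ∀ ε > (0:ℝ), TendstoUniformlyOn
      (fun N s => ∑ n ∈ Finset.range N, c n * ((n:ℂ)+1) ^ (-s)) φ atTop
      {s : ℂ | ε < s.re})
    (hφpos : ∀ s : ℂ, 0 < s.re → 0 ≤ (φ s).re)
    (hΦ : ∀ s : ℂ, Φ s = (c₀ : ℂ) * s + φ s)
    (hnt : ¬ ∃ τ : ℝ, ∀ s : ℂ, 0 < s.re → Φ s = s + (τ : ℂ) * Complex.I) :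
    ∀ ε > (0:ℝ), ∃ η > (0:ℝ), ∀ s : ℂ, ε < s.re → ε + η < (Φ s).re := by
  intro ε hε
  have hre : ∀ s, (Φ s).re = c₀ * s.re + (φ s).re := fun s => by simp [hΦ]
  rcases hc₀.eq_or_lt with rfl | hc₂
  · obtain ⟨K, X, hK⟩ := exists_norm_sub_le_of_tendstoUniformlyOn_dirichletPartialSum hφ
    have hnc : ¬ ∃ τ : ℝ, ∀ s : ℂ, 0 < s.re → φ s = τ * Complex.I := fun ⟨τ, hτ⟩ =>
      hnt ⟨τ, fun s hs => by rw [hΦ, hτ s hs, Nat.cast_one, one_mul]⟩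
    obtain ⟨η, hη, hle⟩ := exists_pos_le_re_of_norm_sub_le
      (differentiableOn_of_tendstoUniformlyOn_dirichletPartialSum hφ) hφpos hK hnc hε
    refine ⟨η, hη, fun s hs => ?_⟩
    rw [hre, Nat.cast_one, one_mul]
    linarith [hle s hs]
  · refine ⟨ε, hε, fun s hs => ?_⟩
    have hc : (2 : ℝ) ≤ c₀ := by exact_mod_cast hc₂
    rw [hre]
    nlinarith [hφpos s (hε.trans hs)]
end

section
/- Let φ(s) = ∑_{n≥1} c_n n^{-s} be a Dirichlet series converging uniformly on ℂ_ε for every ε > 0, such that Re φ(s) > 1/2 for all s ∈ ℂ₊. Then Re c₁ > 1/2, where c₁ is the coefficient of 1^{-s} (the constant coefficient, equal to the limit of φ(s) as Re s → +∞). -/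
/-!
Write `φ = 1/2 + ψ`, so that `Re ψ > 0` on the right half-plane. Along the reals, `φ x - c₁` is
`O(2^{-x})`, since after the constant term a Dirichlet series is dominated by its `2^{-s}` term;
so `Re c₁ ≤ 1/2` would force `Re ψ x = O(2^{-x})`. But Schwarz's lemma, applied to a Cayley
transform of `ψ`, gives the Harnack-type bound `Re ψ 1 ≤ 4 x Re ψ x` for `x ≥ 1`: a positive
harmonic function on the half-plane decays at most like `1/x`.
-/

open Filter Metric Set Asymptotics Topology ComplexConjugate Finset LSeries

namespace Complex

lemma norm_sub_sq_add_four_mul_re_mul_re (w a : ℂ) :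
    ‖w - a‖ ^ 2 + 4 * w.re * a.re = ‖w + conj a‖ ^ 2 := by
  simp only [Complex.sq_norm, normSq_apply, sub_re, add_re, conj_re, sub_im, add_im, conj_im]
  ring

lemma norm_sub_lt_norm_add_conj_s10 {w a : ℂ} (hw : 0 < w.re) (ha : 0 < a.re) :
    ‖w - a‖ < ‖w + conj a‖ := by
  refine lt_of_pow_lt_pow_left₀ 2 (norm_nonneg _) ?_
  nlinarith [norm_sub_sq_add_four_mul_re_mul_re w a, mul_pos hw ha]

lemma add_conj_ne_zero {w a : ℂ} (hw : 0 < w.re) (ha : 0 < a.re) : w + conj a ≠ 0 :=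
  norm_pos_iff.1 ((norm_nonneg _).trans_lt (norm_sub_lt_norm_add_conj_s10 hw ha))

lemma ball_re_subset_re_pos (c : ℂ) : ball c c.re ⊆ {s | 0 < s.re} := fun z hz => by
  have h := (abs_re_le_norm (z - c)).trans_lt (mem_ball_iff_norm.1 hz)
  rw [sub_re, abs_lt] at h
  show 0 < z.re
  linarith [h.1]

end Complex

open Complex

section RightHalfPlane

variable {f : ℂ → ℂ}

/-- Schwarz's lemma for the Cayley transform `(f - f c) / (f + conj (f c))`, which maps the disc
`ball c c.re` of the right half-plane into the unit disc and `c` to `0`. -/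
lemma norm_sub_le_dist_div_re_mul_norm_add_conj (hf : DifferentiableOn ℂ f {s | 0 < s.re})
    (hpos : ∀ s, 0 < s.re → 0 < (f s).re) {c z : ℂ} (hz : z ∈ ball c c.re) :
    ‖f z - f c‖ ≤ dist z c / c.re * ‖f z + conj (f c)‖ := by
  have hc : 0 < c.re := pos_of_mem_ball hz
  set G : ℂ → ℂ := fun s => (f s - f c) / (f s + conj (f c))
  have hsub := ball_re_subset_re_pos c
  have hGd : DifferentiableOn ℂ G (ball c c.re) := fun s hs =>
    ((hf.mono hsub s hs).sub_const _).div ((hf.mono hsub s hs).add_const _)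
      (add_conj_ne_zero (hpos s (hsub hs)) (hpos c hc))
  have hGc : G c = 0 := by simp [G]
  have hmaps : MapsTo G (ball c c.re) (closedBall (G c) 1) := fun s hs => by
    rw [hGc, mem_closedBall, dist_zero_right, norm_div]
    exact div_le_one_of_le₀ (norm_sub_lt_norm_add_conj_s10 (hpos s (hsub hs)) (hpos c hc)).le
      (norm_nonneg _)
  have := dist_le_div_mul_dist_of_mapsTo_ball hGd hmaps hz
  rw [hGc, dist_zero_right, norm_div, div_le_iff₀ (norm_pos_iff.2
    (add_conj_ne_zero (hpos z (hsub hz)) (hpos c hc)))] at this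
  exact this.trans_eq (by ring)

lemma re_le_four_mul_re_of_mul_norm_sub_le {w a : ℂ} {x : ℝ} (hw : 0 < w.re) (ha : 0 < a.re)
    (hx : 1 ≤ x) (h : x * ‖w - a‖ ≤ (x - 1) * ‖w + conj a‖) : w.re ≤ 4 * x * a.re := by
  set M := ‖w + conj a‖
  have hM : w.re ≤ M := by
    have := re_le_norm (w + conj a)
    simp only [add_re, conj_re] at this
    linarith
  have hsq : (x * ‖w - a‖) ^ 2 ≤ ((x - 1) * M) ^ 2 := pow_le_pow_left₀ (by positivity) h 2
  rw [mul_pow, mul_pow, eq_sub_of_add_eq (norm_sub_sq_add_four_mul_re_mul_re w a)] at hsq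
  have h2x : (2 * x - 1) * M ^ 2 ≤ 4 * x ^ 2 * (w.re * a.re) := by linarith
  have hM2 : (2 * x - 1) * w.re ^ 2 ≤ (2 * x - 1) * M ^ 2 :=
    mul_le_mul_of_nonneg_left (pow_le_pow_left₀ hw.le hM 2) (by linarith)
  have : (2 * x - 1) * w.re ≤ 4 * x ^ 2 * a.re := by nlinarith
  nlinarith

lemma re_le_four_mul_re (hf : DifferentiableOn ℂ f {s | 0 < s.re})
    (hpos : ∀ s, 0 < s.re → 0 < (f s).re) {x : ℝ} (hx : 1 ≤ x) :
    (f 1).re ≤ 4 * x * (f x).re := by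
  have hdist : dist (1 : ℂ) x = x - 1 := by
    rw [dist_comm, dist_eq, ← ofReal_one, ← ofReal_sub, norm_real,
      Real.norm_of_nonneg (by linarith)]
  have h1 : (1 : ℂ) ∈ ball (x : ℂ) (x : ℂ).re := by
    rw [mem_ball, hdist, ofReal_re]; linarith
  have := norm_sub_le_dist_div_re_mul_norm_add_conj hf hpos h1
  rw [hdist, ofReal_re, div_mul_eq_mul_div, le_div_iff₀ (by linarith), mul_comm] at this
  exact re_le_four_mul_re_of_mul_norm_sub_le (hpos 1 (by simp))
    (hpos x (by rw [ofReal_re]; linarith)) hx this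

lemma not_isLittleO_re_inv (hf : DifferentiableOn ℂ f {s | 0 < s.re})
    (hpos : ∀ s, 0 < s.re → 0 < (f s).re) :
    ¬ (fun x : ℝ => (f x).re) =o[atTop] fun x => x⁻¹ := by
  intro h
  have hlim : Tendsto (fun x : ℝ => 4 * ((f x).re * x)) atTop (𝓝 0) := by
    simpa using (h.tendsto_div_nhds_zero.const_mul 4)
  have : (f 1).re ≤ 0 := ge_of_tendsto hlim <| by
    filter_upwards [eventually_ge_atTop (1 : ℝ)] with x hx
    linarith [re_le_four_mul_re hf hpos hx]
  linarith [hpos 1 (by simp)]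

end RightHalfPlane

namespace LSeries

lemma tendsto_term_of_tendsto_sum {f : ℕ → ℂ} {s L : ℂ}
    (h : Tendsto (fun N => ∑ n ∈ range N, term f s n) atTop (𝓝 L)) :
    Tendsto (term f s) atTop (𝓝 0) := by
  simpa [sum_range_succ] using ((tendsto_add_atTop_iff_nat 1).2 h).sub h

lemma abscissaOfAbsConv_le_of_tendsto_sum {f : ℕ → ℂ} {s L : ℂ}
    (h : Tendsto (fun N => ∑ n ∈ range N, term f s n) atTop (𝓝 L)) :
    abscissaOfAbsConv f ≤ s.re + 1 := by
  refine abscissaOfAbsConv_le_of_isBigO_rpow (IsBigO.of_bound 1 ?_)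
  have hterm := tendsto_zero_iff_norm_tendsto_zero.1 (tendsto_term_of_tendsto_sum h)
  filter_upwards [hterm.eventually_le_const zero_lt_one, eventually_ne_atTop 0] with n hn hn0
  have hpos : (0 : ℝ) < (n : ℝ) ^ s.re := by positivity
  rw [norm_term_eq, if_neg hn0, div_le_one hpos] at hn
  rwa [one_mul, Real.norm_of_nonneg hpos.le]

lemma LSeries_eq_of_tendsto_sum {f : ℕ → ℂ} {s L : ℂ} (hs : abscissaOfAbsConv f < s.re)
    (h : Tendsto (fun N => ∑ n ∈ range N, term f s n) atTop (𝓝 L)) : LSeries f s = L :=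
  tendsto_nhds_unique
    (LSeriesSummable_of_abscissaOfAbsConv_lt_re hs).LSeriesHasSum.tendsto_sum_nat h

lemma isBigO_LSeries_sub_apply_one {f : ℕ → ℂ} (hf : abscissaOfAbsConv f < ⊤) :
    (fun x : ℝ => LSeries f x - f 1) =O[atTop] fun x => (2 : ℝ) ^ (-x) := by
  set g : ℕ → ℂ := fun n => if n ≤ 1 then 0 else f n
  have hg : abscissaOfAbsConv g < ⊤ := by
    rwa [abscissaOfAbsConv_congr' (f := g) (g := f)]
    filter_upwards [eventually_gt_atTop 1] with n hn
    simp [g, hn.not_ge]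
  have hlim := tendsto_cpow_mul_atTop (n := 1) (fun m hm => if_pos hm) hg
  have hsplit : (fun x : ℝ => LSeries g x) =ᶠ[atTop] fun x => LSeries f x - f 1 := by
    obtain ⟨y, hy, -⟩ := EReal.exists_between_coe_real hf
    filter_upwards [eventually_gt_atTop y] with x hx
    have hsum : LSeriesSummable f x := LSeriesSummable_of_abscissaOfAbsConv_lt_re <| by
      simpa using hy.trans (EReal.coe_lt_coe_iff.2 hx)
    rw [LSeries, LSeries, hsum.tsum_eq_add_tsum_ite 1, term_of_ne_zero one_ne_zero, Nat.cast_one,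
      Complex.one_cpow, div_one, add_sub_cancel_left]
    congr 1 with n
    rcases lt_trichotomy n 1 with hn | rfl | hn
    · simp [Nat.lt_one_iff.1 hn]
    · simp [term, g]
    · simp [term, g, hn.ne', hn.not_ge, (zero_lt_one.trans hn).ne']
  have hscale : (fun x : ℝ => LSeries g x)
      = fun x : ℝ => (2 : ℂ) ^ (-(x : ℂ)) * ((1 + 1) ^ (x : ℂ) * LSeries g x) := by
    ext x
    rw [one_add_one_eq_two, Complex.cpow_neg, inv_mul_cancel_left₀ (by simp)]
  have htwo : (fun x : ℝ => (2 : ℂ) ^ (-(x : ℂ))) =O[atTop] fun x => (2 : ℝ) ^ (-x) :=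
    isBigO_of_le _ fun x => by
      rw [show (2 : ℂ) = ((2 : ℝ) : ℂ) by norm_num, Complex.norm_cpow_eq_rpow_re_of_pos two_pos,
        Real.norm_of_nonneg (by positivity)]
      simp
  refine IsBigO.congr' ?_ hsplit EventuallyEq.rfl
  rw [hscale]
  simpa using htwo.mul (hlim.isBigO_one ℝ)

end LSeries

lemma isLittleO_rpow_neg_inv {b : ℝ} (hb : 1 < b) :
    (fun x : ℝ => b ^ (-x)) =o[atTop] fun x => x⁻¹ := by
  refine (isLittleO_exp_neg_mul_rpow_atTop (Real.log_pos hb) (-1)).congr' ?_ ?_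
  · filter_upwards with x
    rw [Real.rpow_def_of_pos (zero_lt_one.trans hb), neg_mul, mul_neg]
  · filter_upwards [eventually_gt_atTop 0] with x hx
    exact Real.rpow_neg_one x

lemma differentiableOn_re_pos_of_tendstoUniformlyOn {ι : Type*} {p : Filter ι} [p.NeBot]
    {F : ι → ℂ → ℂ} {g : ℂ → ℂ} (hF : ∀ i, Differentiable ℂ (F i))
    (h : ∀ ε > (0 : ℝ), TendstoUniformlyOn F g p {s | ε < s.re}) :
    DifferentiableOn ℂ g {s | 0 < s.re} := by
  have hopen (ε : ℝ) : IsOpen {s : ℂ | ε < s.re} := isOpen_lt continuous_const continuous_re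
  have hloc : TendstoLocallyUniformlyOn F g p {s | 0 < s.re} :=
    tendstoLocallyUniformlyOn_of_forall_exists_nhds fun s hs =>
      ⟨{z | s.re / 2 < z.re}, mem_nhdsWithin_of_mem_nhds <|
        (hopen _).mem_nhds (show s.re / 2 < s.re from half_lt_self hs), h _ (half_pos hs)⟩
  exact hloc.differentiableOn (Eventually.of_forall fun i => (hF i).differentiableOn) (hopen 0)

lemma sum_range_succ_term_comp_pred (c : ℕ → ℂ) (s : ℂ) (N : ℕ) :
    ∑ n ∈ range (N + 1), term (fun n => c (n - 1)) s n
      = ∑ n ∈ range N, c n * ((n : ℂ) + 1) ^ (-s) := by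
  rw [sum_range_succ', term_zero, add_zero]
  congr 1 with n
  rw [term_of_ne_zero n.succ_ne_zero, Complex.cpow_neg, div_eq_mul_inv]
  push_cast
  rfl

/-- The shift `n ↦ n + 1` turns `∑ c n (n + 1)^{-s}` into the `LSeries` of `n ↦ c (n - 1)`. -/
lemma isBigO_sub_apply_zero_of_tendsto_sum {c : ℕ → ℂ} {φ : ℂ → ℂ}
    (h : ∀ s : ℂ, 0 < s.re →
      Tendsto (fun N => ∑ n ∈ range N, c n * ((n : ℂ) + 1) ^ (-s)) atTop (𝓝 (φ s))) :
    (fun x : ℝ => φ x - c 0) =O[atTop] fun x => (2 : ℝ) ^ (-x) := by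
  set a : ℕ → ℂ := fun n => c (n - 1)
  have hsum (s : ℂ) (hs : 0 < s.re) :
      Tendsto (fun N => ∑ n ∈ range N, term a s n) atTop (𝓝 (φ s)) := by
    rw [← tendsto_add_atTop_iff_nat 1]
    exact (h s hs).congr fun N => (sum_range_succ_term_comp_pred c s N).symm
  have habs : abscissaOfAbsConv a ≤ 2 := by
    simpa [one_add_one_eq_two] using abscissaOfAbsConv_le_of_tendsto_sum (hsum 1 one_pos)
  refine (isBigO_LSeries_sub_apply_one (habs.trans_lt (EReal.coe_lt_top 2))).congr' ?_
    EventuallyEq.rfl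
  filter_upwards [eventually_gt_atTop 2] with x hx
  rw [LSeries_eq_of_tendsto_sum (habs.trans_lt (EReal.coe_lt_coe hx))
    (hsum x (by rw [ofReal_re]; linarith))]

/-- If a Dirichlet series `φ(s) = ∑_{n≥1} c_n n^{-s}` satisfies `Re φ > 1/2` on `ℂ₊`,
then its constant coefficient `c₁` satisfies `Re c₁ > 1/2`. -/
theorem constant_coefficient_re_gt_half
    (c : ℕ → ℂ) (φ : ℂ → ℂ)
    (hφ : ∀ ε > (0:ℝ), TendstoUniformlyOn
      (fun N s => ∑ n ∈ Finset.range N, c n * ((n:ℂ)+1) ^ (-s)) φ atTop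
      {s : ℂ | ε < s.re})
    (hpos : ∀ s : ℂ, 0 < s.re → 1/2 < (φ s).re) :
    1/2 < (c 0).re := by
  have hdecay := isBigO_sub_apply_zero_of_tendsto_sum fun s hs =>
    (hφ _ (half_pos hs)).tendsto_at (half_lt_self hs)
  have hdiff : DifferentiableOn ℂ φ {s | 0 < s.re} :=
    differentiableOn_re_pos_of_tendstoUniformlyOn (fun N => Differentiable.fun_sum fun n _ =>
      (differentiable_neg.const_cpow (Or.inl (Nat.cast_add_one_ne_zero n))).const_mul _) hφ
  by_contra! hc
  refine not_isLittleO_re_inv (f := fun s => φ s - 1 / 2) (hdiff.sub_const _)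
    (fun s hs => by simpa using hpos s hs) ?_
  refine (IsBigO.trans ?_ hdecay).trans_isLittleO (isLittleO_rpow_neg_inv one_lt_two)
  refine IsBigO.of_bound' ?_
  filter_upwards [eventually_gt_atTop 0] with x hx
  have hre : 0 < (φ x - 1 / 2).re := by simpa using hpos x (by simpa using hx)
  calc ‖(φ x - 1 / 2).re‖ = (φ x - 1 / 2).re := Real.norm_of_nonneg hre.le
    _ ≤ (φ x - c 0).re := by
      simp only [Complex.sub_re, Complex.div_ofNat_re, Complex.one_re]
      linarith
    _ ≤ ‖φ x - c 0‖ := re_le_norm _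
end
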